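/- arXiv:2108.10027 — 7 statements merged into one kernel-verified Lean document; each statement's English description precedes it below -/
import Mathlib

section
/- For λ, c > 0 and t ≥ 0, the identity ∫_{-ct/2}^{ct/2} I₀((λ/c)√(c²t²/4 − y²)) · I₀((λ/c)√(c²t²/4 − y²)) dy = c ∫₀ᵗ I₀(λs) ds holds, where I₀(x) = Σ_{k=0}^∞ (x/2)^{2k} / (k!)² is the modified Bessel function of order zero. -/
open MeasureTheory Finset

/-- The modified Bessel function of the first kind of order 0,
`I₀(x) = ∑_{k=0}^∞ (x/2)^{2k}/(k!)²`. -/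
noncomputable def besselI0 (x : ℝ) : ℝ :=
  ∑' k : ℕ, (x / 2) ^ (2 * k) / (Nat.factorial k : ℝ) ^ 2

lemma besselI0_summable (x : ℝ) : Summable (fun k : ℕ => (x/2)^(2*k) / (Nat.factorial k : ℝ)^2) := by
  have hg := Real.summable_pow_div_factorial ((x/2)^2)
  simp only [pow_mul]
  refine Summable.of_nonneg_of_le (fun k => by positivity) (fun k => ?_) hg
  apply div_le_div_of_nonneg_left (by positivity) (by positivity)
  have h1 : (1:ℝ) ≤ (Nat.factorial k : ℝ) := by
    exact_mod_cast Nat.one_le_iff_ne_zero.mpr (Nat.factorial_ne_zero k)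
  nlinarith

lemma besselI0_term_nonneg (x : ℝ) (k : ℕ) : (0:ℝ) ≤ (x/2)^(2*k) / (Nat.factorial k : ℝ)^2 := by
  rw [pow_mul]; positivity

lemma besselI0_sq (x : ℝ) : besselI0 x * besselI0 x
    = ∑' n : ℕ, ((2*n).choose n : ℝ) * (x/2)^(2*n) / (Nat.factorial n : ℝ)^2 := by
  have hs : ∀ y : ℝ, Summable (fun k : ℕ => ‖(y/2)^(2*k) / (Nat.factorial k : ℝ)^2‖) := by
    intro y
    simpa only [Real.norm_eq_abs, abs_of_nonneg (besselI0_term_nonneg y _)] using besselI0_summable y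
  rw [besselI0, tsum_mul_tsum_eq_tsum_sum_antidiagonal_of_summable_norm (hs x) (hs x)]
  refine tsum_congr fun n => ?_
  have key : ∀ p : ℕ × ℕ, p ∈ antidiagonal n →
      (x/2)^(2*p.1) / (Nat.factorial p.1 : ℝ)^2 * ((x/2)^(2*p.2) / (Nat.factorial p.2 : ℝ)^2)
      = (n.choose p.1 * n.choose p.2 : ℕ) * ((x/2)^(2*n) / (Nat.factorial n : ℝ)^2) := by
    rintro ⟨h, k⟩ hp
    obtain rfl : h + k = n := Finset.HasAntidiagonal.mem_antidiagonal.mp hp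
    have e1 : ((h+k).choose h : ℝ) * ((Nat.factorial h : ℝ) * (Nat.factorial k : ℝ)) = (Nat.factorial (h+k) : ℝ) := by
      have := Nat.add_choose_mul_factorial_mul_factorial k h
      rw [add_comm k h] at this
      push_cast [← this]; ring
    have e2 : ((h+k).choose k : ℝ) * ((Nat.factorial h : ℝ) * (Nat.factorial k : ℝ)) = (Nat.factorial (h+k) : ℝ) := by
      have := Nat.add_choose_mul_factorial_mul_factorial h k
      push_cast [← this]; ring
    have e3 : (Nat.factorial (h+k) : ℝ)^2
        = (((h+k).choose h : ℝ) * ((h+k).choose k : ℝ)) * ((Nat.factorial h:ℝ)^2 * (Nat.factorial k:ℝ)^2) := by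
      linear_combination (-(((h+k).choose k : ℝ)) * ((Nat.factorial h : ℝ) * (Nat.factorial k : ℝ))) * e1
        + (-(Nat.factorial (h+k) : ℝ)) * e2
    have fh : (Nat.factorial h : ℝ) ≠ 0 := Nat.cast_ne_zero.mpr (Nat.factorial_ne_zero h)
    have fk : (Nat.factorial k : ℝ) ≠ 0 := Nat.cast_ne_zero.mpr (Nat.factorial_ne_zero k)
    have fhk : (Nat.factorial (h+k) : ℝ) ≠ 0 := Nat.cast_ne_zero.mpr (Nat.factorial_ne_zero _)
    push_cast
    field_simp
    linear_combination (x^(2*h)*x^(2*k)*(1/2)^(2*h)*(1/2)^(2*k)) * e3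
  have hnat : ∑ p ∈ antidiagonal n, n.choose p.1 * n.choose p.2 = (2*n).choose n := by
    rw [two_mul, Nat.add_choose_eq]
  rw [Finset.sum_congr rfl key, ← Finset.sum_mul, ← Nat.cast_sum, hnat]
  ring

lemma integral_sq_sub_sq_pow (a : ℝ) (ha : 0 ≤ a) (n : ℕ) :
    ∫ y in (-a)..a, (a^2 - y^2)^n
      = 2 * a^(2*n+1) * 4^n * (Nat.factorial n : ℝ)^2 / (Nat.factorial (2*n+1) : ℝ) := by
  induction n with
  | zero => simp [Nat.factorial]; ring
  | succ n ih =>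
    have hcont : ∀ m : ℕ, Continuous (fun y : ℝ => (a^2 - y^2)^m) := by
      intro m; fun_prop
    have hderiv : ∀ y : ℝ, HasDerivAt (fun y : ℝ => y * (a^2 - y^2)^(n+1))
        ((2*(n:ℝ)+3) * (a^2-y^2)^(n+1) - (2*((n:ℝ)+1))*a^2*(a^2-y^2)^n) y := by
      intro y
      have h1 : HasDerivAt (fun y : ℝ => a^2 - y^2) (-(2*y)) y := by
        simpa using ((hasDerivAt_pow 2 y).const_sub (a^2))
      have h2 : HasDerivAt (fun y : ℝ => y * (a^2 - y^2)^(n+1))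
          (1 * (a^2-y^2)^(n+1) + y * (((n+1:ℕ):ℝ) * (a^2-y^2)^n * -(2*y))) y :=
        (hasDerivAt_id y).mul (h1.pow (n+1))
      convert h2 using 1
      push_cast
      ring
    have hftc : ∫ y in (-a)..a, ((2*(n:ℝ)+3) * (a^2-y^2)^(n+1) - (2*((n:ℝ)+1))*a^2*(a^2-y^2)^n)
        = 0 := by
      rw [intervalIntegral.integral_eq_sub_of_hasDerivAt (fun y _ => hderiv y)
        (by apply Continuous.intervalIntegrable; fun_prop)]
      simp
    rw [intervalIntegral.integral_sub (((hcont (n+1)).intervalIntegrable _ _).const_mul _)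
        (((hcont n).intervalIntegrable _ _).const_mul _),
      intervalIntegral.integral_const_mul, intervalIntegral.integral_const_mul, ih] at hftc
    have h3 : (0:ℝ) < 2*(n:ℝ)+3 := by positivity
    have key : ∫ y in (-a)..a, (a^2-y^2)^(n+1)
        = (2*((n:ℝ)+1))*a^2 * (2 * a^(2*n+1) * 4^n * (Nat.factorial n : ℝ)^2 / (Nat.factorial (2*n+1) : ℝ)) / (2*(n:ℝ)+3) := by
      field_simp at hftc ⊢
      linarith [hftc]
    rw [key]
    have f1 : (Nat.factorial (2*(n+1)+1) : ℝ) = (2*(n:ℝ)+3) * ((2*(n:ℝ)+2) * (Nat.factorial (2*n+1) : ℝ)) := by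
      have : 2*(n+1)+1 = (2*n+1) + 1 + 1 := by ring
      rw [this, Nat.factorial_succ, Nat.factorial_succ]
      push_cast; ring
    have f2 : (Nat.factorial (n+1) : ℝ) = ((n:ℝ)+1) * (Nat.factorial n : ℝ) := by
      rw [Nat.factorial_succ]; push_cast; ring
    have fz : (Nat.factorial (2*n+1) : ℝ) ≠ 0 := Nat.cast_ne_zero.mpr (Nat.factorial_ne_zero _)
    rw [f1, f2]
    field_simp
    ring

lemma coeff_eq (lam c t : ℝ) (hc : c ≠ 0) (n : ℕ) :
    ((2*n).choose n : ℝ) * ((lam/(2*c))^2)^n / (Nat.factorial n : ℝ)^2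
      * (2 * (c*t/2)^(2*n+1) * 4^n * (Nat.factorial n : ℝ)^2 / (Nat.factorial (2*n+1) : ℝ))
    = c * (t * ((lam*t/2)^2)^n / ((2*(n:ℝ)+1) * (Nat.factorial n : ℝ)^2)) := by
  have e1 : ((2*n).choose n : ℝ) * ((Nat.factorial n : ℝ) * (Nat.factorial n : ℝ)) = ((2*n).factorial : ℝ) := by
    have := Nat.add_choose_mul_factorial_mul_factorial n n
    rw [← two_mul] at this
    push_cast [← this]; ring
  have e2 : ((2*n+1).factorial : ℝ) = (2*(n:ℝ)+1) * ((2*n).factorial : ℝ) := by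
    rw [Nat.factorial_succ]; push_cast; ring
  have hpow : (c*t/2)^(2*n+1) = (c*t/2) * (((c*t/2)^2)^n) := by
    rw [pow_succ, pow_mul]; ring
  have hq : ((lam/(2*c))^2)^n * (((c*t/2)^2)^n) * 4^n = ((lam*t/2)^2)^n := by
    rw [← mul_pow, ← mul_pow]; congr 1; field_simp; ring
  have fn : (Nat.factorial n : ℝ) ≠ 0 := Nat.cast_ne_zero.mpr (Nat.factorial_ne_zero _)
  have f2n : ((2*n).factorial : ℝ) ≠ 0 := Nat.cast_ne_zero.mpr (Nat.factorial_ne_zero _)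
  have h2n1 : (2*(n:ℝ)+1) ≠ 0 := by positivity
  rw [e2, hpow]
  set u := ((lam/(2*c))^2)^n with hu
  set v := ((c*t/2)^2)^n with hv
  set w := (4:ℝ)^n with hw
  set z := ((lam*t/2)^2)^n with hz
  rw [← hq, ← e1]
  have hC : ((2*n).choose n : ℝ) ≠ 0 := Nat.cast_ne_zero.mpr (Nat.choose_pos (by omega)).ne'
  field_simp

lemma aux_summable (u v : ℝ) :
    Summable (fun n : ℕ => v * (u^2)^n / ((2*(n:ℝ)+1) * (Nat.factorial n : ℝ)^2)) := by
  refine Summable.of_norm ?_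
  have hg := (Real.summable_pow_div_factorial (u^2)).mul_left |v|
  refine Summable.of_nonneg_of_le (fun n => norm_nonneg _) (fun n => ?_) hg
  rw [Real.norm_eq_abs, abs_div, abs_mul, abs_of_nonneg (by positivity : (0:ℝ) ≤ (u^2)^n),
    abs_of_nonneg (by positivity : (0:ℝ) ≤ (2*(n:ℝ)+1) * (Nat.factorial n : ℝ)^2), mul_div_assoc]
  refine mul_le_mul_of_nonneg_left ?_ (abs_nonneg v)
  apply div_le_div_of_nonneg_left (by positivity) (by positivity)
  have h1 : (1:ℝ) ≤ (Nat.factorial n : ℝ) := by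
    exact_mod_cast Nat.one_le_iff_ne_zero.mpr (Nat.factorial_ne_zero n)
  nlinarith

/-- `∫_{-ct/2}^{ct/2} I₀((λ/c)√(c²t²/4 − y²))² dy = c ∫₀ᵗ I₀(λs) ds`. -/
theorem besselI0_convolution_at_zero (lam c t : ℝ) (hlam : 0 < lam) (hc : 0 < c) (ht : 0 ≤ t) :
    ∫ y in (-(c * t / 2))..(c * t / 2),
        besselI0 (lam / c * Real.sqrt (c ^ 2 * t ^ 2 / 4 - y ^ 2)) *
          besselI0 (lam / c * Real.sqrt (c ^ 2 * t ^ 2 / 4 - y ^ 2))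
      = c * ∫ s in (0:ℝ)..t, besselI0 (lam * s) := by
  have ha : (0:ℝ) ≤ c * t / 2 := by positivity
  set a : ℝ := c * t / 2 with ha_def
  have haa : c ^ 2 * t ^ 2 / 4 = a ^ 2 := by rw [ha_def]; ring
  -- Step 1: pointwise rewrite of the LHS integrand on the interval
  have h1 : Set.EqOn
      (fun y => besselI0 (lam / c * Real.sqrt (c ^ 2 * t ^ 2 / 4 - y ^ 2)) *
          besselI0 (lam / c * Real.sqrt (c ^ 2 * t ^ 2 / 4 - y ^ 2)))
      (fun y => ∑' n : ℕ, ((2*n).choose n : ℝ) * (((lam/(2*c))^2) * (a^2 - y^2))^n / (Nat.factorial n : ℝ)^2)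
      (Set.uIcc (-a) a) := by
    intro y hy
    rw [Set.uIcc_of_le (neg_le_self ha), Set.mem_Icc] at hy
    have hy' : (0:ℝ) ≤ a^2 - y^2 := by nlinarith [hy.1, hy.2]
    simp only
    rw [besselI0_sq]
    refine tsum_congr fun n => ?_
    have hx : (lam / c * Real.sqrt (c^2*t^2/4 - y^2) / 2)^(2*n) = (((lam/(2*c))^2) * (a^2 - y^2))^n := by
      rw [haa, pow_mul]
      congr 1
      have h2 : (lam / c * Real.sqrt (a^2 - y^2) / 2)^2 = (lam/(2*c))^2 * (Real.sqrt (a^2-y^2))^2 := by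
        ring
      rw [h2, Real.sq_sqrt hy']
    rw [hx]
  rw [intervalIntegral.integral_congr h1, intervalIntegral.integral_of_le (neg_le_self ha)]
  -- Step 2: compute each term's integral
  have hval : ∀ n : ℕ, ∫ y in Set.Ioc (-a) a,
      ((2*n).choose n : ℝ) * (((lam/(2*c))^2) * (a^2 - y^2))^n / (Nat.factorial n : ℝ)^2
      = c * (t * ((lam*t/2)^2)^n / ((2*(n:ℝ)+1) * (Nat.factorial n : ℝ)^2)) := by
    intro n
    rw [← intervalIntegral.integral_of_le (neg_le_self ha)]
    have hfun : ∀ y : ℝ, ((2*n).choose n : ℝ) * (((lam/(2*c))^2) * (a^2 - y^2))^n / (Nat.factorial n : ℝ)^2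
        = (((2*n).choose n : ℝ) * ((lam/(2*c))^2)^n / (Nat.factorial n : ℝ)^2) * (a^2 - y^2)^n := by
      intro y; rw [mul_pow]; ring
    simp_rw [hfun]
    rw [intervalIntegral.integral_const_mul, integral_sq_sub_sq_pow a ha n, ← coeff_eq lam c t hc.ne' n]
  -- Step 3: swap sum and integral on the LHS
  have hcont : ∀ n : ℕ, Continuous (fun y : ℝ =>
      ((2*n).choose n : ℝ) * (((lam/(2*c))^2) * (a^2 - y^2))^n / (Nat.factorial n : ℝ)^2) := by
    intro n; fun_prop
  have hint : ∀ n : ℕ, Integrable (fun y : ℝ =>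
      ((2*n).choose n : ℝ) * (((lam/(2*c))^2) * (a^2 - y^2))^n / (Nat.factorial n : ℝ)^2)
      (volume.restrict (Set.Ioc (-a) a)) := by
    intro n
    exact (hcont n).integrableOn_Ioc
  have hnormval : ∀ n : ℕ, ∫ y in Set.Ioc (-a) a,
      ‖((2*n).choose n : ℝ) * (((lam/(2*c))^2) * (a^2 - y^2))^n / (Nat.factorial n : ℝ)^2‖
      = c * (t * ((lam*t/2)^2)^n / ((2*(n:ℝ)+1) * (Nat.factorial n : ℝ)^2)) := by
    intro n
    rw [← hval n]
    refine setIntegral_congr_fun measurableSet_Ioc fun y hy => ?_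
    rw [Set.mem_Ioc] at hy
    have hy' : (0:ℝ) ≤ a^2 - y^2 := by nlinarith [hy.1, hy.2]
    rw [Real.norm_eq_abs, abs_of_nonneg (by positivity)]
  have hsum : Summable fun n : ℕ => ∫ y in Set.Ioc (-a) a,
      ‖((2*n).choose n : ℝ) * (((lam/(2*c))^2) * (a^2 - y^2))^n / (Nat.factorial n : ℝ)^2‖ := by
    simp_rw [hnormval]
    exact ((aux_summable (lam*t/2) t).mul_left c)
  rw [← integral_tsum_of_summable_integral_norm hint hsum]
  simp_rw [hval]
  -- Step 4: compute the RHS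
  have hRHS : ∫ s in (0:ℝ)..t, besselI0 (lam * s)
      = ∑' n : ℕ, (t * ((lam*t/2)^2)^n / ((2*(n:ℝ)+1) * (Nat.factorial n : ℝ)^2)) := by
    rw [intervalIntegral.integral_of_le ht]
    have hint2 : ∀ n : ℕ, Integrable (fun s : ℝ => (lam*s/2)^(2*n) / (Nat.factorial n : ℝ)^2)
        (volume.restrict (Set.Ioc (0:ℝ) t)) := by
      intro n
      exact (by fun_prop : Continuous fun s : ℝ => (lam*s/2)^(2*n) / (Nat.factorial n : ℝ)^2).integrableOn_Ioc
    have hval2 : ∀ n : ℕ, ∫ s in Set.Ioc (0:ℝ) t, (lam*s/2)^(2*n) / (Nat.factorial n : ℝ)^2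
        = t * ((lam*t/2)^2)^n / ((2*(n:ℝ)+1) * (Nat.factorial n : ℝ)^2) := by
      intro n
      rw [← intervalIntegral.integral_of_le ht]
      have hfun : ∀ s : ℝ, (lam*s/2)^(2*n) / (Nat.factorial n : ℝ)^2
          = ((lam/2)^(2*n) / (Nat.factorial n : ℝ)^2) * s^(2*n) := by
        intro s
        have h3 : lam*s/2 = (lam/2)*s := by ring
        rw [h3, mul_pow]
        ring
      simp_rw [hfun]
      rw [intervalIntegral.integral_const_mul, integral_pow]
      have hp1 : (lam/2)^(2*n) * t^(2*n+1) = t * ((lam*t/2)^2)^n := by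
        have h4 : ((lam*t/2)^2)^n = ((lam/2)^2)^n * (t^2)^n := by
          rw [← mul_pow]; congr 1; ring
        have h5 : t^(2*n+1) = (t^2)^n * t := by rw [pow_succ, pow_mul]
        have h6 : (lam/2)^(2*n) = ((lam/2)^2)^n := pow_mul (lam/2) 2 n
        rw [h4, h6, h5]; ring
      have fn : (Nat.factorial n : ℝ) ≠ 0 := Nat.cast_ne_zero.mpr (Nat.factorial_ne_zero _)
      have h2n1 : (2*(n:ℝ)+1) ≠ 0 := by positivity
      rw [zero_pow (by omega : 2*n+1 ≠ 0)]
      push_cast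
      field_simp
      have h7 : (2:ℝ)^(2*n) = (2^2)^n := pow_mul 2 2 n
      rw [sub_zero, hp1]
      ring
    simp only [besselI0]
    rw [← integral_tsum_of_summable_integral_norm hint2 ?hsum2]
    · refine tsum_congr fun n => ?_
      have harg : ∀ s : ℝ, (lam * s / 2) ^ (2*n) / (Nat.factorial n : ℝ)^2
          = (lam*s/2)^(2*n) / (Nat.factorial n : ℝ)^2 := fun s => rfl
      exact hval2 n
    case hsum2 =>
      have hnv : ∀ n : ℕ, ∫ s in Set.Ioc (0:ℝ) t, ‖(lam*s/2)^(2*n) / (Nat.factorial n : ℝ)^2‖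
          = t * ((lam*t/2)^2)^n / ((2*(n:ℝ)+1) * (Nat.factorial n : ℝ)^2) := by
        intro n
        rw [← hval2 n]
        refine setIntegral_congr_fun measurableSet_Ioc fun s hs => ?_
        have hpos : (0:ℝ) ≤ (lam*s/2)^(2*n) / (Nat.factorial n : ℝ)^2 := by
          rw [pow_mul]; positivity
        rw [Real.norm_eq_abs, abs_of_nonneg hpos]
      simp_rw [hnv]
      exact aux_summable (lam*t/2) t
  rw [hRHS]
  exact tsum_mul_left
end

section
/- Suppose f₀, f₁ : ℝ × (0,∞) → ℝ are C² functions satisfying the first-order system ∂f₀/∂t = −c ∂f₀/∂η + (λ(t)/2)(f₁ − 2f₀) and ∂f₁/∂t = c ∂f₁/∂η + (λ(t)/2)(f₀ − 2f₁), with λ ∈ C¹. Then f = f₀ + f₁ satisfies ∂²f/∂t² + 2λ(t) ∂f/∂t + (1/2)((3/2)λ(t)² + λ'(t)) f = c² ∂²f/∂η². -/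
/-!
With `f = f₀ + f₁` and `w = f₀ - f₁` the system becomes
`∂ₜf = -c ∂_η w - (λ/2) f` and `∂ₜw = -c ∂_η f - (3λ/2) w`.
Differentiating the first equation in `t`, the second in `η`, and using `∂_η∂ₜ w = ∂ₜ∂_η w`
eliminates `w` and leaves the damped wave equation for `f`.
-/

open Filter Topology Function

/- Partial derivatives are taken along coordinate slices, so that `deriv (fun s => f η s) t` in the
theorem is definitionally `∂₂ (uncurry f) (η, t)`. -/
noncomputable def partialFst {E : Type*} [NormedAddCommGroup E] [NormedSpace ℝ E]
    (F : ℝ × ℝ → E) (p : ℝ × ℝ) : E :=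
  deriv (fun x => F (x, p.2)) p.1

noncomputable def partialSnd {E : Type*} [NormedAddCommGroup E] [NormedSpace ℝ E]
    (F : ℝ × ℝ → E) (p : ℝ × ℝ) : E :=
  deriv (fun t => F (p.1, t)) p.2

local notation "∂₁" => partialFst
local notation "∂₂" => partialSnd

section Partial

variable {E : Type*} [NormedAddCommGroup E] [NormedSpace ℝ E] {F G : ℝ × ℝ → E} {p : ℝ × ℝ}

theorem hasDerivAt_fderiv_fst (h : DifferentiableAt ℝ F p) :
    HasDerivAt (fun x => F (x, p.2)) (fderiv ℝ F p (1, 0)) p.1 :=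
  h.hasFDerivAt.comp_hasDerivAt p.1 ((hasDerivAt_id _).prodMk (hasDerivAt_const _ _))

theorem hasDerivAt_fderiv_snd (h : DifferentiableAt ℝ F p) :
    HasDerivAt (fun t => F (p.1, t)) (fderiv ℝ F p (0, 1)) p.2 :=
  h.hasFDerivAt.comp_hasDerivAt p.2 ((hasDerivAt_const _ _).prodMk (hasDerivAt_id _))

theorem partialFst_eq_fderiv (h : DifferentiableAt ℝ F p) : ∂₁ F p = fderiv ℝ F p (1, 0) :=
  (hasDerivAt_fderiv_fst h).deriv

theorem partialSnd_eq_fderiv (h : DifferentiableAt ℝ F p) : ∂₂ F p = fderiv ℝ F p (0, 1) :=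
  (hasDerivAt_fderiv_snd h).deriv

theorem hasDerivAt_partialFst (h : DifferentiableAt ℝ F p) :
    HasDerivAt (fun x => F (x, p.2)) (∂₁ F p) p.1 :=
  (hasDerivAt_fderiv_fst h).differentiableAt.hasDerivAt

theorem hasDerivAt_partialSnd (h : DifferentiableAt ℝ F p) :
    HasDerivAt (fun t => F (p.1, t)) (∂₂ F p) p.2 :=
  (hasDerivAt_fderiv_snd h).differentiableAt.hasDerivAt

theorem Filter.EventuallyEq.partialFst_eq (h : F =ᶠ[𝓝 p] G) : ∂₁ F p = ∂₁ G p :=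
  (h.comp_tendsto ((continuous_id.prodMk continuous_const).tendsto' p.1 p rfl)).deriv_eq

theorem Filter.EventuallyEq.partialSnd_eq (h : F =ᶠ[𝓝 p] G) : ∂₂ F p = ∂₂ G p :=
  (h.comp_tendsto ((continuous_const.prodMk continuous_id).tendsto' p.2 p rfl)).deriv_eq

theorem partialFst_add (hF : DifferentiableAt ℝ F p) (hG : DifferentiableAt ℝ G p) :
    ∂₁ (F + G) p = ∂₁ F p + ∂₁ G p :=
  ((hasDerivAt_partialFst hF).add (hasDerivAt_partialFst hG)).deriv

theorem partialFst_sub (hF : DifferentiableAt ℝ F p) (hG : DifferentiableAt ℝ G p) :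
    ∂₁ (F - G) p = ∂₁ F p - ∂₁ G p :=
  ((hasDerivAt_partialFst hF).sub (hasDerivAt_partialFst hG)).deriv

theorem partialSnd_add (hF : DifferentiableAt ℝ F p) (hG : DifferentiableAt ℝ G p) :
    ∂₂ (F + G) p = ∂₂ F p + ∂₂ G p :=
  ((hasDerivAt_partialSnd hF).add (hasDerivAt_partialSnd hG)).deriv

theorem partialSnd_sub (hF : DifferentiableAt ℝ F p) (hG : DifferentiableAt ℝ G p) :
    ∂₂ (F - G) p = ∂₂ F p - ∂₂ G p :=
  ((hasDerivAt_partialSnd hF).sub (hasDerivAt_partialSnd hG)).deriv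

theorem Differentiable.partialFst_eq (hF : Differentiable ℝ F) :
    ∂₁ F = fun q => fderiv ℝ F q (1, 0) :=
  funext fun q => partialFst_eq_fderiv (hF q)

theorem Differentiable.partialSnd_eq (hF : Differentiable ℝ F) :
    ∂₂ F = fun q => fderiv ℝ F q (0, 1) :=
  funext fun q => partialSnd_eq_fderiv (hF q)

theorem ContDiff.differentiable_partialFst (hF : ContDiff ℝ 2 F) : Differentiable ℝ (∂₁ F) := by
  rw [(hF.differentiable two_ne_zero).partialFst_eq]
  exact ((hF.fderiv_right one_add_one_eq_two.le).differentiable one_ne_zero).clm_apply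
    (differentiable_const _)

theorem ContDiff.partialFst_partialSnd (hF : ContDiff ℝ 2 F) : ∂₁ (∂₂ F) = ∂₂ (∂₁ F) := by
  have hd : Differentiable ℝ F := hF.differentiable two_ne_zero
  have hd' : Differentiable ℝ (fderiv ℝ F) :=
    (hF.fderiv_right one_add_one_eq_two.le).differentiable one_ne_zero
  ext p
  rw [hd.partialSnd_eq, hd.partialFst_eq]
  have h₁ := (hasDerivAt_fderiv_fst (hd' p)).clm_apply (hasDerivAt_const p.1 ((0 : ℝ), (1 : ℝ)))
  have h₂ := (hasDerivAt_fderiv_snd (hd' p)).clm_apply (hasDerivAt_const p.2 ((1 : ℝ), (0 : ℝ)))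
  simp only [map_zero, add_zero] at h₁ h₂
  rw [partialFst, partialSnd, h₁.deriv, h₂.deriv]
  exact (hF.contDiffAt.isSymmSndFDerivAt (by simp)) _ _

end Partial

theorem damped_wave_of_first_order_system {f w : ℝ × ℝ → ℝ} {α β : ℝ → ℝ} {c : ℝ}
    {U : Set (ℝ × ℝ)} (hf : ContDiff ℝ 2 f) (hw : ContDiff ℝ 2 w) (hα : Differentiable ℝ α)
    (hU : IsOpen U) (hft : ∀ p ∈ U, ∂₂ f p = -c * ∂₁ w p - α p.2 * f p)
    (hwt : ∀ p ∈ U, ∂₂ w p = -c * ∂₁ f p - β p.2 * w p) {p : ℝ × ℝ} (hp : p ∈ U) :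
    ∂₂ (∂₂ f) p + (α p.2 + β p.2) * ∂₂ f p + (α p.2 * β p.2 + deriv α p.2) * f p
      = c ^ 2 * ∂₁ (∂₁ f) p := by
  have hUp : U ∈ 𝓝 p := hU.mem_nhds hp
  have hftt : ∂₂ (∂₂ f) p = -c * ∂₂ (∂₁ w) p - (deriv α p.2 * f p + α p.2 * ∂₂ f p) := by
    rw [Filter.EventuallyEq.partialSnd_eq (eventually_of_mem hUp hft)]
    exact (((hasDerivAt_partialSnd (hw.differentiable_partialFst p)).const_mul (-c)).sub
      ((hα p.2).hasDerivAt.mul (hasDerivAt_partialSnd (hf.differentiable two_ne_zero p)))).deriv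
  have hwtx : ∂₁ (∂₂ w) p = -c * ∂₁ (∂₁ f) p - β p.2 * ∂₁ w p := by
    rw [Filter.EventuallyEq.partialFst_eq (eventually_of_mem hUp hwt)]
    exact (((hasDerivAt_partialFst (hf.differentiable_partialFst p)).const_mul (-c)).sub
      ((hasDerivAt_partialFst (hw.differentiable two_ne_zero p)).const_mul (β p.2))).deriv
  rw [hw.partialFst_partialSnd] at hwtx
  linear_combination hftt - c * hwtx + β p.2 * hft p hp

theorem boundary_system_sum_sub {F₀ F₁ : ℝ × ℝ → ℝ} {c l : ℝ} {p : ℝ × ℝ}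
    (h₀ : DifferentiableAt ℝ F₀ p) (h₁ : DifferentiableAt ℝ F₁ p)
    (hsys₀ : ∂₂ F₀ p = -c * ∂₁ F₀ p + l / 2 * (F₁ p - 2 * F₀ p))
    (hsys₁ : ∂₂ F₁ p = c * ∂₁ F₁ p + l / 2 * (F₀ p - 2 * F₁ p)) :
    ∂₂ (F₀ + F₁) p = -c * ∂₁ (F₀ - F₁) p - l / 2 * (F₀ + F₁) p ∧
      ∂₂ (F₀ - F₁) p = -c * ∂₁ (F₀ + F₁) p - 3 * l / 2 * (F₀ - F₁) p := by
  rw [partialSnd_add h₀ h₁, partialSnd_sub h₀ h₁, partialFst_add h₀ h₁, partialFst_sub h₀ h₁,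
    Pi.add_apply, Pi.sub_apply]
  constructor
  · linear_combination hsys₀ + hsys₁
  · linear_combination hsys₀ - hsys₁

/-- If `f₀, f₁` solve the boundary system of the standard orthogonal planar motion,
then `f = f₀ + f₁` solves
`∂²f/∂t² + 2λ(t) ∂f/∂t + (1/2)((3/2)λ(t)² + λ'(t)) f = c² ∂²f/∂η²`. -/
theorem boundary_system_standard (c : ℝ)
    (f0 f1 : ℝ → ℝ → ℝ)
    (hf0 : ContDiff ℝ 2 (Function.uncurry f0)) (hf1 : ContDiff ℝ 2 (Function.uncurry f1))
    (lam : ℝ → ℝ) (hlam : ContDiff ℝ 1 lam)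
    (hsys0 : ∀ η t : ℝ, 0 < t →
      deriv (fun s => f0 η s) t
        = -c * deriv (fun z => f0 z t) η + lam t / 2 * (f1 η t - 2 * f0 η t))
    (hsys1 : ∀ η t : ℝ, 0 < t →
      deriv (fun s => f1 η s) t
        = c * deriv (fun z => f1 z t) η + lam t / 2 * (f0 η t - 2 * f1 η t)) :
    ∀ η t : ℝ, 0 < t →
      deriv (fun s => deriv (fun s' => f0 η s' + f1 η s') s) t
          + 2 * lam t * deriv (fun s => f0 η s + f1 η s) t
          + 1 / 2 * (3 / 2 * lam t ^ 2 + deriv lam t) * (f0 η t + f1 η t)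
        = c ^ 2 * deriv (fun z => deriv (fun z' => f0 z' t + f1 z' t) z) η := by
  intro η t ht
  have hd₀ := hf0.differentiable two_ne_zero
  have hd₁ := hf1.differentiable two_ne_zero
  have hsys (p : ℝ × ℝ) (hp : 0 < p.2) :=
    boundary_system_sum_sub (hd₀ p) (hd₁ p) (hsys0 p.1 p.2 hp) (hsys1 p.1 p.2 hp)
  have key := damped_wave_of_first_order_system (β := fun s => 3 * lam s / 2) (hf0.add hf1)
    (hf0.sub hf1) ((hlam.differentiable one_ne_zero).div_const 2)
    (isOpen_lt continuous_const continuous_snd) (fun p hp => (hsys p hp).1)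
    (fun p hp => (hsys p hp).2) (p := (η, t)) ht
  rw [deriv_div_const] at key
  show ∂₂ (∂₂ (uncurry f0 + uncurry f1)) (η, t) + 2 * lam t * ∂₂ (uncurry f0 + uncurry f1) (η, t)
      + 1 / 2 * (3 / 2 * lam t ^ 2 + deriv lam t) * (uncurry f0 (η, t) + uncurry f1 (η, t))
    = c ^ 2 * ∂₁ (∂₁ (uncurry f0 + uncurry f1)) (η, t)
  linear_combination key
end

section
/- Suppose f₀, f₁ : ℝ × (0,∞) → ℝ are C² functions satisfying ∂f₀/∂t = −c ∂f₀/∂η + (λ(t)/3)(f₁ − 3f₀) and ∂f₁/∂t = c ∂f₁/∂η + (λ(t)/3)(f₀ − 3f₁), with λ ∈ C¹. Then f = f₀ + f₁ satisfies ∂²f/∂t² + 2λ(t) ∂f/∂t + (2/3)((4/3)λ(t)² + λ'(t)) f = c² ∂²f/∂η². -/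
open Function

section helpers

variable {F : ℝ → ℝ → ℝ}

private lemma line1_hasDerivAt (η t : ℝ) : HasDerivAt (fun z : ℝ => (z, t)) ((1:ℝ), (0:ℝ)) η :=
  (hasDerivAt_id η).prodMk (hasDerivAt_const η t)

private lemma line2_hasDerivAt (η t : ℝ) : HasDerivAt (fun s : ℝ => (η, s)) ((0:ℝ), (1:ℝ)) t :=
  (hasDerivAt_const t η).prodMk (hasDerivAt_id t)

/-- derivative in the second variable -/
private lemma hd2 (hF : ContDiff ℝ 2 (Function.uncurry F)) (η t : ℝ) :
    HasDerivAt (fun s => F η s) (fderiv ℝ (uncurry F) (η, t) (0, 1)) t := by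
  have h := ((hF.differentiable two_ne_zero (η, t)).hasFDerivAt).comp_hasDerivAt t
    (line2_hasDerivAt η t)
  exact h

/-- derivative in the first variable -/
private lemma hd1 (hF : ContDiff ℝ 2 (Function.uncurry F)) (η t : ℝ) :
    HasDerivAt (fun z => F z t) (fderiv ℝ (uncurry F) (η, t) (1, 0)) η := by
  have h := ((hF.differentiable two_ne_zero (η, t)).hasFDerivAt).comp_hasDerivAt η
    (line1_hasDerivAt η t)
  exact h

private lemma fderiv_diff (hF : ContDiff ℝ 2 (Function.uncurry F)) : Differentiable ℝ (fderiv ℝ (uncurry F)) :=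
  (hF.fderiv_right (m := 1) le_rfl).differentiable one_ne_zero

/-- t-derivative of the η-partial -/
private lemma hd_p1_t (hF : ContDiff ℝ 2 (Function.uncurry F)) (η t : ℝ) :
    HasDerivAt (fun s => fderiv ℝ (uncurry F) (η, s) (1, 0))
      (fderiv ℝ (fderiv ℝ (uncurry F)) (η, t) (0, 1) (1, 0)) t := by
  have h1 : HasDerivAt (fun s => fderiv ℝ (uncurry F) (η, s))
      (fderiv ℝ (fderiv ℝ (uncurry F)) (η, t) (0, 1)) t :=
    ((fderiv_diff hF (η, t)).hasFDerivAt).comp_hasDerivAt t (line2_hasDerivAt η t)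
  exact ((ContinuousLinearMap.apply ℝ ℝ ((1:ℝ), (0:ℝ))).hasFDerivAt).comp_hasDerivAt t h1

/-- η-derivative of the η-partial -/
private lemma hd_p1_eta (hF : ContDiff ℝ 2 (Function.uncurry F)) (η t : ℝ) :
    HasDerivAt (fun z => fderiv ℝ (uncurry F) (z, t) (1, 0))
      (fderiv ℝ (fderiv ℝ (uncurry F)) (η, t) (1, 0) (1, 0)) η := by
  have h1 : HasDerivAt (fun z => fderiv ℝ (uncurry F) (z, t))
      (fderiv ℝ (fderiv ℝ (uncurry F)) (η, t) (1, 0)) η :=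
    ((fderiv_diff hF (η, t)).hasFDerivAt).comp_hasDerivAt η (line1_hasDerivAt η t)
  exact ((ContinuousLinearMap.apply ℝ ℝ ((1:ℝ), (0:ℝ))).hasFDerivAt).comp_hasDerivAt η h1

/-- η-derivative of the t-partial -/
private lemma hd_p2_eta (hF : ContDiff ℝ 2 (Function.uncurry F)) (η t : ℝ) :
    HasDerivAt (fun z => fderiv ℝ (uncurry F) (z, t) (0, 1))
      (fderiv ℝ (fderiv ℝ (uncurry F)) (η, t) (1, 0) (0, 1)) η := by
  have h1 : HasDerivAt (fun z => fderiv ℝ (uncurry F) (z, t))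
      (fderiv ℝ (fderiv ℝ (uncurry F)) (η, t) (1, 0)) η :=
    ((fderiv_diff hF (η, t)).hasFDerivAt).comp_hasDerivAt η (line1_hasDerivAt η t)
  exact ((ContinuousLinearMap.apply ℝ ℝ ((0:ℝ), (1:ℝ))).hasFDerivAt).comp_hasDerivAt η h1

private lemma clairaut (hF : ContDiff ℝ 2 (Function.uncurry F)) (η t : ℝ) :
    fderiv ℝ (fderiv ℝ (uncurry F)) (η, t) (0, 1) (1, 0)
      = fderiv ℝ (fderiv ℝ (uncurry F)) (η, t) (1, 0) (0, 1) :=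
  (hF.contDiffAt.isSymmSndFDerivAt (by simp)) _ _

end helpers

/-- If `f₀, f₁` solve the boundary system of the reflecting orthogonal planar motion,
then `f = f₀ + f₁` solves
`∂²f/∂t² + 2λ(t) ∂f/∂t + (2/3)((4/3)λ(t)² + λ'(t)) f = c² ∂²f/∂η²`. -/
theorem boundary_system_reflecting (c : ℝ)
    (f0 f1 : ℝ → ℝ → ℝ)
    (hf0 : ContDiff ℝ 2 (Function.uncurry f0)) (hf1 : ContDiff ℝ 2 (Function.uncurry f1))
    (lam : ℝ → ℝ) (hlam : ContDiff ℝ 1 lam)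
    (hsys0 : ∀ η t : ℝ, 0 < t →
      deriv (fun s => f0 η s) t
        = -c * deriv (fun z => f0 z t) η + lam t / 3 * (f1 η t - 3 * f0 η t))
    (hsys1 : ∀ η t : ℝ, 0 < t →
      deriv (fun s => f1 η s) t
        = c * deriv (fun z => f1 z t) η + lam t / 3 * (f0 η t - 3 * f1 η t)) :
    ∀ η t : ℝ, 0 < t →
      deriv (fun s => deriv (fun s' => f0 η s' + f1 η s') s) t
          + 2 * lam t * deriv (fun s => f0 η s + f1 η s) t
          + 2 / 3 * (4 / 3 * lam t ^ 2 + deriv lam t) * (f0 η t + f1 η t)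
        = c ^ 2 * deriv (fun z => deriv (fun z' => f0 z' t + f1 z' t) z) η := by
  intro η t ht
  -- abbreviations for partial derivatives at the point (η, t)
  set a := fderiv ℝ (uncurry f0) (η, t) (1, 0) with ha
  set b := fderiv ℝ (uncurry f1) (η, t) (1, 0) with hb
  set K0 := fderiv ℝ (fderiv ℝ (uncurry f0)) (η, t) (1, 0) (1, 0) with hK0
  set K1 := fderiv ℝ (fderiv ℝ (uncurry f1)) (η, t) (1, 0) (1, 0) with hK1
  set M0 := fderiv ℝ (fderiv ℝ (uncurry f0)) (η, t) (0, 1) (1, 0) with hM0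
  set M1 := fderiv ℝ (fderiv ℝ (uncurry f1)) (η, t) (0, 1) (1, 0) with hM1
  -- rewrite each partial t-derivative via hsys on (0, ∞)
  have key0 : ∀ s : ℝ, 0 < s → fderiv ℝ (uncurry f0) (η, s) (0, 1)
      = -c * fderiv ℝ (uncurry f0) (η, s) (1, 0) + lam s / 3 * (f1 η s - 3 * f0 η s) := by
    intro s hs
    rw [← (hd2 hf0 η s).deriv, hsys0 η s hs, (hd1 hf0 η s).deriv]
  have key1 : ∀ s : ℝ, 0 < s → fderiv ℝ (uncurry f1) (η, s) (0, 1)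
      = c * fderiv ℝ (uncurry f1) (η, s) (1, 0) + lam s / 3 * (f0 η s - 3 * f1 η s) := by
    intro s hs
    rw [← (hd2 hf1 η s).deriv, hsys1 η s hs, (hd1 hf1 η s).deriv]
  -- first time derivative of f = f0 + f1
  have hft : deriv (fun s => f0 η s + f1 η s) t
      = -c * a + c * b - 2 / 3 * lam t * (f0 η t + f1 η t) := by
    rw [((hd2 hf0 η t).fun_add (hd2 hf1 η t)).deriv, key0 t ht, key1 t ht]; ring
  -- the inner t-derivative as a function of s
  have inner_eq : (fun s => deriv (fun s' => f0 η s' + f1 η s') s)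
      = fun s => fderiv ℝ (uncurry f0) (η, s) (0, 1) + fderiv ℝ (uncurry f1) (η, s) (0, 1) := by
    funext s; exact ((hd2 hf0 η s).add (hd2 hf1 η s)).deriv
  -- second time derivative
  have hdlam : HasDerivAt lam (deriv lam t) t :=
    ((hlam.differentiable one_ne_zero) t).hasDerivAt
  have hg : HasDerivAt (fun s => -c * fderiv ℝ (uncurry f0) (η, s) (1, 0)
        + c * fderiv ℝ (uncurry f1) (η, s) (1, 0) - 2 / 3 * (lam s * (f0 η s + f1 η s)))
      (-c * M0 + c * M1
        - 2 / 3 * (deriv lam t * (f0 η t + f1 η t)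
            + lam t * (fderiv ℝ (uncurry f0) (η, t) (0, 1)
              + fderiv ℝ (uncurry f1) (η, t) (0, 1)))) t := by
    exact (((hd_p1_t hf0 η t).const_mul (-c)).add ((hd_p1_t hf1 η t).const_mul c)).sub
      ((hdlam.mul ((hd2 hf0 η t).add (hd2 hf1 η t))).const_mul (2 / 3))
  have hftt : deriv (fun s => deriv (fun s' => f0 η s' + f1 η s') s) t
      = -c * M0 + c * M1
        - 2 / 3 * (deriv lam t * (f0 η t + f1 η t)
            + lam t * (fderiv ℝ (uncurry f0) (η, t) (0, 1)
              + fderiv ℝ (uncurry f1) (η, t) (0, 1))) := by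
    rw [inner_eq]
    have heq : (fun s => fderiv ℝ (uncurry f0) (η, s) (0, 1)
          + fderiv ℝ (uncurry f1) (η, s) (0, 1))
        =ᶠ[nhds t] (fun s => -c * fderiv ℝ (uncurry f0) (η, s) (1, 0)
          + c * fderiv ℝ (uncurry f1) (η, s) (1, 0)
          - 2 / 3 * (lam s * (f0 η s + f1 η s))) := by
      filter_upwards [Ioi_mem_nhds ht] with s hs
      rw [key0 s hs, key1 s hs]; ring
    rw [heq.deriv_eq, hg.deriv]
  -- mixed partials: compute M0 and M1 via Clairaut and the η-differentiated system
  have hMeq0 : M0 = -c * K0 + lam t / 3 * (b - 3 * a) := by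
    rw [hM0, clairaut hf0 η t, ← (hd_p2_eta hf0 η t).deriv]
    have heq : (fun z => fderiv ℝ (uncurry f0) (z, t) (0, 1))
        = fun z => -c * fderiv ℝ (uncurry f0) (z, t) (1, 0)
            + lam t / 3 * (f1 z t - 3 * f0 z t) := by
      funext z
      rw [← (hd2 hf0 z t).deriv, hsys0 z t ht, (hd1 hf0 z t).deriv]
    rw [heq]
    have := (((hd_p1_eta hf0 η t).const_mul (-c)).fun_add
      ((((hd1 hf1 η t).sub ((hd1 hf0 η t).const_mul 3)).const_mul (lam t / 3)))).deriv
    simpa using this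
  have hMeq1 : M1 = c * K1 + lam t / 3 * (a - 3 * b) := by
    rw [hM1, clairaut hf1 η t, ← (hd_p2_eta hf1 η t).deriv]
    have heq : (fun z => fderiv ℝ (uncurry f1) (z, t) (0, 1))
        = fun z => c * fderiv ℝ (uncurry f1) (z, t) (1, 0)
            + lam t / 3 * (f0 z t - 3 * f1 z t) := by
      funext z
      rw [← (hd2 hf1 z t).deriv, hsys1 z t ht, (hd1 hf1 z t).deriv]
    rw [heq]
    have := (((hd_p1_eta hf1 η t).const_mul c).fun_add
      ((((hd1 hf0 η t).sub ((hd1 hf1 η t).const_mul 3)).const_mul (lam t / 3)))).deriv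
    simpa using this
  -- the spatial second derivative
  have hrhs : deriv (fun z => deriv (fun z' => f0 z' t + f1 z' t) z) η = K0 + K1 := by
    have inner_eq' : (fun z => deriv (fun z' => f0 z' t + f1 z' t) z)
        = fun z => fderiv ℝ (uncurry f0) (z, t) (1, 0) + fderiv ℝ (uncurry f1) (z, t) (1, 0) := by
      funext z; exact ((hd1 hf0 z t).add (hd1 hf1 z t)).deriv
    rw [inner_eq', ((hd_p1_eta hf0 η t).fun_add (hd_p1_eta hf1 η t)).deriv]
  rw [hftt, hft, hrhs, hMeq0, hMeq1, key0 t ht, key1 t ht]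
  ring
end

section
/- Let λ, c > 0, t > 0 and define A(η,t) = I₀((λ/(3c))√(c²t²−η²)) for |η| < ct. Then f(η,t) = (e^{-λt}/(4c)) [ (λ/3) A(η,t) + ∂A/∂t(η,t) ] satisfies ∂²f/∂t² + 2λ ∂f/∂t + (8/9)λ² f = c² ∂²f/∂η². -/
namespace RPM

/-- coefficients `1 / (k! * (k+j)!)` -/
noncomputable def aj (j k : ℕ) : ℝ :=
  1 / ((Nat.factorial k : ℝ) * (Nat.factorial (k + j) : ℝ))

/-- `Gf j u = ∑ u^k / (k! (k+j)!)`; `Gf 0 (x²/4) = I₀(x)` and `(Gf j)' = Gf (j+1)`. -/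
noncomputable def Gf (j : ℕ) (u : ℝ) : ℝ := ∑' k : ℕ, aj j k * u ^ k

lemma fact_pos (k : ℕ) : (0:ℝ) < (Nat.factorial k : ℝ) := by
  exact_mod_cast Nat.factorial_pos k

lemma fact_one_le (k : ℕ) : (1:ℝ) ≤ (Nat.factorial k : ℝ) := by
  exact_mod_cast Nat.one_le_iff_ne_zero.mpr (Nat.factorial_pos k).ne'

lemma aj_abs_le (j k : ℕ) : |aj j k| ≤ 1 / (Nat.factorial k : ℝ) := by
  rw [aj, abs_of_nonneg (by positivity)]
  rw [div_le_div_iff₀ (by positivity) (fact_pos k)]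
  nlinarith [fact_one_le (k + j), fact_pos k]

lemma summable_aj (j : ℕ) (x : ℝ) : Summable (fun k => aj j k * x ^ k) := by
  apply Summable.of_norm_bounded (Real.summable_pow_div_factorial |x|)
  intro k
  rw [norm_mul, norm_pow, Real.norm_eq_abs, Real.norm_eq_abs, div_eq_mul_one_div (|x| ^ k)]
  rw [mul_comm (|x| ^ k)]
  exact mul_le_mul_of_nonneg_right (aj_abs_le j k) (by positivity)

lemma hasDerivAt_tsum_pow (a : ℕ → ℝ) (ha : ∀ k, |a k| ≤ 1 / (Nat.factorial k : ℝ))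
    (hsa : ∀ x : ℝ, Summable (fun k => a k * x ^ k)) (u : ℝ) :
    HasDerivAt (fun x : ℝ => ∑' k : ℕ, a k * x ^ k)
      (∑' k : ℕ, ((k : ℝ) + 1) * a (k + 1) * u ^ k) u := by
  set R : ℝ := |u| + 1 with hR
  have hR1 : (1:ℝ) ≤ R := by rw [hR]; linarith [abs_nonneg u]
  have hbound : ∀ (n : ℕ) (y : ℝ), y ∈ Metric.ball (0:ℝ) R →
      ‖a n * ((n : ℝ) * y ^ (n - 1))‖ ≤ (2 * R) ^ n / (Nat.factorial n : ℝ) := by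
    intro n y hy
    have hyR : |y| ≤ R := le_of_lt (by simpa using hy)
    have h2 : |y| ^ (n - 1) ≤ R ^ (n - 1) := pow_le_pow_left₀ (abs_nonneg y) hyR _
    have h3 : R ^ (n - 1) ≤ R ^ n := pow_le_pow_right₀ hR1 (Nat.sub_le n 1)
    have h4 : (n : ℝ) ≤ 2 ^ n := by exact_mod_cast (Nat.lt_two_pow_self (n := n)).le
    have key : |a n| * ((n : ℝ) * |y| ^ (n - 1)) ≤ (1 / (Nat.factorial n : ℝ)) * (2 ^ n * R ^ n) := by
      apply mul_le_mul (ha n) ?_ (by positivity) (by positivity)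
      exact mul_le_mul h4 (h2.trans h3) (by positivity) (by positivity)
    calc ‖a n * ((n : ℝ) * y ^ (n - 1))‖ = |a n| * ((n : ℝ) * |y| ^ (n - 1)) := by
          simp [Real.norm_eq_abs, abs_mul, abs_pow, Nat.abs_cast]
      _ ≤ (1 / (Nat.factorial n : ℝ)) * (2 ^ n * R ^ n) := key
      _ = (2 * R) ^ n / (Nat.factorial n : ℝ) := by rw [mul_pow]; ring
  have key : HasDerivAt (fun x : ℝ => ∑' k : ℕ, a k * x ^ k)
      (∑' k : ℕ, a k * ((k : ℝ) * u ^ (k - 1))) u := by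
    refine hasDerivAt_tsum_of_isPreconnected (Real.summable_pow_div_factorial (2 * R))
      Metric.isOpen_ball ((convex_ball (0:ℝ) R).isPreconnected)
      (fun n y _ => (hasDerivAt_pow n y).const_mul (a n)) hbound ?_ (hsa 0) ?_
    · simp only [Metric.mem_ball, dist_self]; linarith
    · simp only [Metric.mem_ball, dist_zero_right, Real.norm_eq_abs, hR]; linarith
  have hsum' : Summable (fun k : ℕ => a k * ((k : ℝ) * u ^ (k - 1))) := by
    apply Summable.of_norm_bounded (Real.summable_pow_div_factorial (2 * R))
    intro n
    exact hbound n u (by simp only [Metric.mem_ball, dist_zero_right, Real.norm_eq_abs]; linarith)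
  have heq : ∑' k : ℕ, a k * ((k : ℝ) * u ^ (k - 1))
      = ∑' k : ℕ, ((k : ℝ) + 1) * a (k + 1) * u ^ k := by
    rw [Summable.tsum_eq_zero_add hsum']
    simp only [Nat.cast_zero, zero_mul, mul_zero, zero_add]
    refine tsum_congr fun k => ?_
    push_cast [Nat.add_sub_cancel]
    ring
  rwa [heq] at key

lemma Gf_deriv_coeff (j k : ℕ) : ((k : ℝ) + 1) * aj j (k + 1) = aj (j + 1) k := by
  have h : k + 1 + j = (k + j) + 1 := by omega
  have h' : k + (j + 1) = (k + j) + 1 := by omega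
  rw [aj, aj, h, h', Nat.factorial_succ (k + j), Nat.factorial_succ k]
  push_cast
  have h1 := fact_pos k
  have h2 := fact_pos (k + j)
  field_simp

lemma Gf_hasDerivAt (j : ℕ) (u : ℝ) : HasDerivAt (Gf j) (Gf (j + 1) u) u := by
  have h := hasDerivAt_tsum_pow (aj j) (aj_abs_le j) (summable_aj j) u
  have : (∑' k : ℕ, ((k : ℝ) + 1) * aj j (k + 1) * u ^ k) = Gf (j + 1) u := by
    rw [Gf]
    exact tsum_congr fun k => by rw [Gf_deriv_coeff]
  rwa [this] at h

lemma summable_aj_shift (j : ℕ) (u : ℝ) : Summable (fun k => aj j (k + 1) * u ^ (k + 1)) := by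
  apply Summable.of_norm_bounded (g := fun k => |u| * (|u| ^ k / (Nat.factorial k : ℝ)))
    ((Real.summable_pow_div_factorial |u|).mul_left |u|)
  intro k
  have h1 : |aj j (k + 1)| ≤ 1 / (Nat.factorial (k + 1) : ℝ) := aj_abs_le j (k + 1)
  have h2 : (1 : ℝ) / (Nat.factorial (k + 1) : ℝ) ≤ 1 / (Nat.factorial k : ℝ) := by
    apply one_div_le_one_div_of_le (fact_pos k)
    exact_mod_cast Nat.factorial_le (Nat.le_succ k)
  have h3 : ‖aj j (k + 1) * u ^ (k + 1)‖ = |aj j (k + 1)| * (|u| ^ k * |u|) := by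
    rw [norm_mul, norm_pow, Real.norm_eq_abs, Real.norm_eq_abs, pow_succ]
  rw [h3]
  calc |aj j (k + 1)| * (|u| ^ k * |u|) ≤ (1 / (Nat.factorial k : ℝ)) * (|u| ^ k * |u|) := by
        apply mul_le_mul_of_nonneg_right (h1.trans h2) (by positivity)
    _ = |u| * (|u| ^ k / (Nat.factorial k : ℝ)) := by ring

lemma Gf_const_coeff (j : ℕ) : ((j : ℝ) + 1) * aj (j + 1) 0 = aj j 0 := by
  rw [aj, aj, Nat.zero_add, Nat.zero_add, Nat.factorial_succ]
  push_cast
  have := fact_pos j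
  field_simp

lemma Gf_ode_coeff (j k : ℕ) :
    aj (j + 2) k + ((j : ℝ) + 1) * aj (j + 1) (k + 1) = aj j (k + 1) := by
  have e1 : k + (j + 2) = k + j + 1 + 1 := by omega
  have e2 : k + 1 + (j + 1) = k + j + 1 + 1 := by omega
  have e3 : k + 1 + j = (k + j) + 1 := by omega
  rw [aj, aj, aj, e1, e2, e3, Nat.factorial_succ (k + j + 1), Nat.factorial_succ (k + j),
    Nat.factorial_succ k]
  push_cast
  have h1 := fact_pos k
  have h2 := fact_pos (k + j)
  field_simp
  ring

lemma Gf_ode (j : ℕ) (u : ℝ) :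
    u * Gf (j + 2) u + ((j : ℝ) + 1) * Gf (j + 1) u = Gf j u := by
  have hs2 : Summable (fun k => aj (j + 2) k * u ^ (k + 1)) :=
    ((summable_aj (j + 2) u).mul_right u).congr fun k => by ring
  have hs1 : Summable (fun k => ((j : ℝ) + 1) * aj (j + 1) k * u ^ k) :=
    ((summable_aj (j + 1) u).mul_left ((j : ℝ) + 1)).congr fun k => by ring
  have hs1' : Summable (fun k => ((j : ℝ) + 1) * aj (j + 1) (k + 1) * u ^ (k + 1)) :=
    ((summable_aj_shift (j + 1) u).mul_left ((j : ℝ) + 1)).congr fun k => by ring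
  have h1 : u * Gf (j + 2) u = ∑' k : ℕ, aj (j + 2) k * u ^ (k + 1) := by
    rw [Gf, ← tsum_mul_left]
    exact tsum_congr fun k => by ring
  have h2 : ((j : ℝ) + 1) * Gf (j + 1) u = ∑' k : ℕ, ((j : ℝ) + 1) * aj (j + 1) k * u ^ k := by
    rw [Gf, ← tsum_mul_left]
    exact tsum_congr fun k => by ring
  rw [h1, h2, Summable.tsum_eq_zero_add hs1, Gf, Summable.tsum_eq_zero_add (summable_aj j u)]
  have step : (∑' k : ℕ, aj (j + 2) k * u ^ (k + 1))
      + (∑' k : ℕ, ((j : ℝ) + 1) * aj (j + 1) (k + 1) * u ^ (k + 1))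
      = ∑' k : ℕ, aj j (k + 1) * u ^ (k + 1) := by
    rw [← Summable.tsum_add hs2 hs1']
    exact tsum_congr fun k => by rw [← Gf_ode_coeff j k]; ring
  calc (∑' k : ℕ, aj (j + 2) k * u ^ (k + 1))
      + (((j : ℝ) + 1) * aj (j + 1) 0 * u ^ 0
        + ∑' k : ℕ, ((j : ℝ) + 1) * aj (j + 1) (k + 1) * u ^ (k + 1))
      = ((j : ℝ) + 1) * aj (j + 1) 0 * u ^ 0
        + ((∑' k : ℕ, aj (j + 2) k * u ^ (k + 1))
          + ∑' k : ℕ, ((j : ℝ) + 1) * aj (j + 1) (k + 1) * u ^ (k + 1)) := by ring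
    _ = aj j 0 * u ^ 0 + ∑' k : ℕ, aj j (k + 1) * u ^ (k + 1) := by
        rw [step, Gf_const_coeff]

lemma besselI0_eq (x : ℝ) : besselI0 x = Gf 0 (x ^ 2 / 4) := by
  rw [besselI0, Gf]
  refine tsum_congr fun k => ?_
  rw [aj, Nat.add_zero, pow_mul]
  have : (x / 2) ^ 2 = x ^ 2 / 4 := by ring
  rw [this]
  ring

/-- the inner polynomial `Q(z,s) = (λ²/36c²)(c²s² − z²)`. -/
noncomputable def Qf (lam c z s : ℝ) : ℝ := lam ^ 2 / (36 * c ^ 2) * (c ^ 2 * s ^ 2 - z ^ 2)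

noncomputable def Wf (lam c z s : ℝ) : ℝ :=
  lam / 3 * Gf 0 (Qf lam c z s) + lam ^ 2 / 18 * s * Gf 1 (Qf lam c z s)

noncomputable def Ff (lam c z s : ℝ) : ℝ := Real.exp (-(lam * s)) / (4 * c) * Wf lam c z s

noncomputable def Wt (lam c z s : ℝ) : ℝ :=
  lam / 3 * (Gf 1 (Qf lam c z s) * (lam ^ 2 / 18 * s))
    + (lam ^ 2 / 18 * Gf 1 (Qf lam c z s)
      + lam ^ 2 / 18 * s * (Gf 2 (Qf lam c z s) * (lam ^ 2 / 18 * s)))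

noncomputable def Ft (lam c z s : ℝ) : ℝ :=
  -lam * Real.exp (-(lam * s)) / (4 * c) * Wf lam c z s
    + Real.exp (-(lam * s)) / (4 * c) * Wt lam c z s

noncomputable def Wtt (lam c z s : ℝ) : ℝ :=
  lam / 3 * (Gf 2 (Qf lam c z s) * (lam ^ 2 / 18 * s) * (lam ^ 2 / 18 * s)
      + Gf 1 (Qf lam c z s) * (lam ^ 2 / 18))
    + (lam ^ 2 / 18 * (Gf 2 (Qf lam c z s) * (lam ^ 2 / 18 * s))
      + (lam ^ 2 / 18 * (Gf 2 (Qf lam c z s) * (lam ^ 2 / 18 * s))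
        + lam ^ 2 / 18 * s * (Gf 3 (Qf lam c z s) * (lam ^ 2 / 18 * s) * (lam ^ 2 / 18 * s)
          + Gf 2 (Qf lam c z s) * (lam ^ 2 / 18))))

noncomputable def Ftt (lam c z s : ℝ) : ℝ :=
  (-lam * (-lam * Real.exp (-(lam * s))) / (4 * c) * Wf lam c z s
    + -lam * Real.exp (-(lam * s)) / (4 * c) * Wt lam c z s)
  + (-lam * Real.exp (-(lam * s)) / (4 * c) * Wt lam c z s
    + Real.exp (-(lam * s)) / (4 * c) * Wtt lam c z s)

noncomputable def Wx (lam c z s : ℝ) : ℝ :=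
  lam / 3 * (Gf 1 (Qf lam c z s) * (-(lam ^ 2 / (18 * c ^ 2)) * z))
    + lam ^ 2 / 18 * s * (Gf 2 (Qf lam c z s) * (-(lam ^ 2 / (18 * c ^ 2)) * z))

noncomputable def Fx (lam c z s : ℝ) : ℝ := Real.exp (-(lam * s)) / (4 * c) * Wx lam c z s

noncomputable def Wxx (lam c z s : ℝ) : ℝ :=
  lam / 3 * (Gf 2 (Qf lam c z s) * (-(lam ^ 2 / (18 * c ^ 2)) * z) * (-(lam ^ 2 / (18 * c ^ 2)) * z)
      + Gf 1 (Qf lam c z s) * -(lam ^ 2 / (18 * c ^ 2)))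
    + lam ^ 2 / 18 * s * (Gf 3 (Qf lam c z s) * (-(lam ^ 2 / (18 * c ^ 2)) * z) * (-(lam ^ 2 / (18 * c ^ 2)) * z)
      + Gf 2 (Qf lam c z s) * -(lam ^ 2 / (18 * c ^ 2)))

noncomputable def Fxx (lam c z s : ℝ) : ℝ := Real.exp (-(lam * s)) / (4 * c) * Wxx lam c z s

variable {lam c : ℝ}

lemma hasDerivAt_Qt (hc : c ≠ 0) (z s : ℝ) :
    HasDerivAt (fun s' => Qf lam c z s') (lam ^ 2 / 18 * s) s := by
  have h := (((hasDerivAt_pow 2 s).const_mul (c ^ 2)).sub_const (z ^ 2)).const_mul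
    (lam ^ 2 / (36 * c ^ 2))
  refine h.congr_deriv ?_
  field_simp
  ring

lemma hasDerivAt_Qz (hc : c ≠ 0) (z s : ℝ) :
    HasDerivAt (fun z' => Qf lam c z' s) (-(lam ^ 2 / (18 * c ^ 2)) * z) z := by
  have h := (((hasDerivAt_const z (c ^ 2 * s ^ 2)).sub (hasDerivAt_pow 2 z)).const_mul
    (lam ^ 2 / (36 * c ^ 2)))
  refine h.congr_deriv ?_
  field_simp
  ring

lemma hasDerivAt_GQt (hc : c ≠ 0) (j : ℕ) (z s : ℝ) :
    HasDerivAt (fun s' => Gf j (Qf lam c z s'))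
      (Gf (j + 1) (Qf lam c z s) * (lam ^ 2 / 18 * s)) s :=
  (Gf_hasDerivAt j (Qf lam c z s)).comp s (hasDerivAt_Qt hc z s)

lemma hasDerivAt_GQz (hc : c ≠ 0) (j : ℕ) (z s : ℝ) :
    HasDerivAt (fun z' => Gf j (Qf lam c z' s))
      (Gf (j + 1) (Qf lam c z s) * (-(lam ^ 2 / (18 * c ^ 2)) * z)) z :=
  HasDerivAt.comp (h := fun z' => Qf lam c z' s) z (Gf_hasDerivAt j (Qf lam c z s))
    (hasDerivAt_Qz hc z s)

lemma hasDerivAt_Ks (lam : ℝ) (s : ℝ) :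
    HasDerivAt (fun s' : ℝ => lam ^ 2 / 18 * s') (lam ^ 2 / 18) s := by
  simpa using (hasDerivAt_id s).const_mul (lam ^ 2 / 18)

lemma hasDerivAt_E (lam : ℝ) (s : ℝ) :
    HasDerivAt (fun s' : ℝ => Real.exp (-(lam * s'))) (-lam * Real.exp (-(lam * s))) s := by
  have h1 : HasDerivAt (fun s' : ℝ => -(lam * s')) (-lam) s := by
    simpa using (hasDerivAt_neg s).const_mul lam
  simpa [mul_comm] using h1.exp

lemma hasDerivAt_Wt (hc : c ≠ 0) (z s : ℝ) :
    HasDerivAt (fun s' => Wf lam c z s') (Wt lam c z s) s :=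
  ((hasDerivAt_GQt hc 0 z s).const_mul (lam / 3)).add
    ((hasDerivAt_Ks lam s).mul (hasDerivAt_GQt hc 1 z s))

lemma hasDerivAt_Ff_t (hc : c ≠ 0) (z s : ℝ) :
    HasDerivAt (fun s' => Ff lam c z s') (Ft lam c z s) s :=
  ((hasDerivAt_E lam s).div_const (4 * c)).mul (hasDerivAt_Wt hc z s)

lemma hasDerivAt_Wtt (hc : c ≠ 0) (z s : ℝ) :
    HasDerivAt (fun s' => Wt lam c z s') (Wtt lam c z s) s :=
  (((hasDerivAt_GQt hc 1 z s).mul (hasDerivAt_Ks lam s)).const_mul (lam / 3)).add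
    (((hasDerivAt_GQt hc 1 z s).const_mul (lam ^ 2 / 18)).add
      ((hasDerivAt_Ks lam s).mul ((hasDerivAt_GQt hc 2 z s).mul (hasDerivAt_Ks lam s))))

lemma hasDerivAt_Ft_t (hc : c ≠ 0) (z s : ℝ) :
    HasDerivAt (fun s' => Ft lam c z s') (Ftt lam c z s) s :=
  ((((hasDerivAt_E lam s).const_mul (-lam)).div_const (4 * c)).mul (hasDerivAt_Wt hc z s)).add
    (((hasDerivAt_E lam s).div_const (4 * c)).mul (hasDerivAt_Wtt hc z s))

lemma hasDerivAt_Mz (lam c : ℝ) (z : ℝ) :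
    HasDerivAt (fun z' : ℝ => -(lam ^ 2 / (18 * c ^ 2)) * z') (-(lam ^ 2 / (18 * c ^ 2))) z := by
  simpa using (hasDerivAt_id z).const_mul (-(lam ^ 2 / (18 * c ^ 2)))

lemma hasDerivAt_Wx (hc : c ≠ 0) (z s : ℝ) :
    HasDerivAt (fun z' => Wf lam c z' s) (Wx lam c z s) z :=
  ((hasDerivAt_GQz hc 0 z s).const_mul (lam / 3)).add
    ((hasDerivAt_GQz hc 1 z s).const_mul (lam ^ 2 / 18 * s))

lemma hasDerivAt_Ff_x (hc : c ≠ 0) (z s : ℝ) :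
    HasDerivAt (fun z' => Ff lam c z' s) (Fx lam c z s) z :=
  (hasDerivAt_Wx hc z s).const_mul (Real.exp (-(lam * s)) / (4 * c))

lemma hasDerivAt_Wxx (hc : c ≠ 0) (z s : ℝ) :
    HasDerivAt (fun z' => Wx lam c z' s) (Wxx lam c z s) z :=
  (((hasDerivAt_GQz hc 1 z s).mul (hasDerivAt_Mz lam c z)).const_mul (lam / 3)).add
    (((hasDerivAt_GQz hc 2 z s).mul (hasDerivAt_Mz lam c z)).const_mul (lam ^ 2 / 18 * s))

lemma hasDerivAt_Fx_x (hc : c ≠ 0) (z s : ℝ) :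
    HasDerivAt (fun z' => Fx lam c z' s) (Fxx lam c z s) z :=
  (hasDerivAt_Wxx hc z s).const_mul (Real.exp (-(lam * s)) / (4 * c))

lemma key_identity (hc : c ≠ 0) (z s : ℝ) :
    Ftt lam c z s + 2 * lam * Ft lam c z s + 8 / 9 * lam ^ 2 * Ff lam c z s
      = c ^ 2 * Fxx lam c z s := by
  have h1 : Qf lam c z s * Gf 2 (Qf lam c z s) + Gf 1 (Qf lam c z s) = Gf 0 (Qf lam c z s) := by
    simpa using Gf_ode 0 (Qf lam c z s)
  have h2 : Qf lam c z s * Gf 3 (Qf lam c z s) + 2 * Gf 2 (Qf lam c z s)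
      = Gf 1 (Qf lam c z s) := by
    have h := Gf_ode 1 (Qf lam c z s)
    norm_num at h
    linarith
  rw [Ftt, Ft, Ff, Fxx, Wtt, Wt, Wf, Wxx, ← h1, ← h2]
  rw [Qf]
  field_simp
  ring

end RPM

/-- With `A(η,t) = I₀((λ/(3c))√(c²t²−η²))`, the boundary density of the reflecting motion
`f(η,t) = (e^{-λt}/(4c)) [ (λ/3) A(η,t) + ∂A/∂t(η,t) ]` satisfies
`∂²f/∂t² + 2λ ∂f/∂t + (8/9)λ² f = c² ∂²f/∂η²` for `|η| < ct`. -/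
theorem boundary_density_reflecting_pde (lam c : ℝ) (hlam : 0 < lam) (hc : 0 < c)
    (A : ℝ → ℝ → ℝ)
    (hA : ∀ η t, A η t = besselI0 (lam / (3 * c) * Real.sqrt (c ^ 2 * t ^ 2 - η ^ 2)))
    (f : ℝ → ℝ → ℝ)
    (hf : ∀ η t, f η t = Real.exp (-(lam * t)) / (4 * c) *
        (lam / 3 * A η t + deriv (fun s => A η s) t)) :
    ∀ η t : ℝ, 0 < t → |η| < c * t →
      deriv (fun s => deriv (fun s' => f η s') s) t
          + 2 * lam * deriv (fun s => f η s) t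
          + 8 / 9 * lam ^ 2 * f η t
        = c ^ 2 * deriv (fun z => deriv (fun z' => f z' t) z) η := by
  intro η t ht hη
  have hc0 : c ≠ 0 := ne_of_gt hc
  have hreg : η ^ 2 < c ^ 2 * t ^ 2 := by
    nlinarith [(abs_lt.mp hη).1, (abs_lt.mp hη).2]
  have hopen : ∀ z : ℝ, IsOpen {s : ℝ | z ^ 2 < c ^ 2 * s ^ 2} := by
    intro z
    have h : {s : ℝ | z ^ 2 < c ^ 2 * s ^ 2} = (fun s : ℝ => c ^ 2 * s ^ 2) ⁻¹' Set.Ioi (z ^ 2) :=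
      rfl
    rw [h]
    exact isOpen_Ioi.preimage (by continuity)
  have hopenz : IsOpen {z : ℝ | z ^ 2 < c ^ 2 * t ^ 2} := by
    have h : {z : ℝ | z ^ 2 < c ^ 2 * t ^ 2} = (fun z : ℝ => z ^ 2) ⁻¹' Set.Iio (c ^ 2 * t ^ 2) :=
      rfl
    rw [h]
    exact isOpen_Iio.preimage (by continuity)
  have hAeq : ∀ z s : ℝ, z ^ 2 < c ^ 2 * s ^ 2 → A z s = RPM.Gf 0 (RPM.Qf lam c z s) := by
    intro z s h
    rw [hA, RPM.besselI0_eq]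
    congr 1
    have hnn : (0:ℝ) ≤ c ^ 2 * s ^ 2 - z ^ 2 := by linarith
    rw [mul_pow, Real.sq_sqrt hnn, RPM.Qf, div_pow]
    ring
  have hfeq : ∀ z s : ℝ, z ^ 2 < c ^ 2 * s ^ 2 → f z s = RPM.Ff lam c z s := by
    intro z s h
    have hAe : (fun s' => A z s') =ᶠ[nhds s] fun s' => RPM.Gf 0 (RPM.Qf lam c z s') := by
      filter_upwards [(hopen z).mem_nhds h] with x hx using hAeq z x hx
    rw [hf, hAeq z s h, hAe.deriv_eq, (RPM.hasDerivAt_GQt hc0 0 z s).deriv]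
    rw [RPM.Ff, RPM.Wf]
    ring
  have e0 : f η t = RPM.Ff lam c η t := hfeq η t hreg
  have e1 : deriv (fun s => f η s) t = RPM.Ft lam c η t := by
    have ef : (fun s => f η s) =ᶠ[nhds t] fun s => RPM.Ff lam c η s := by
      filter_upwards [(hopen η).mem_nhds hreg] with s hs using hfeq η s hs
    rw [ef.deriv_eq, (RPM.hasDerivAt_Ff_t hc0 η t).deriv]
  have e2 : deriv (fun s => deriv (fun s' => f η s') s) t = RPM.Ftt lam c η t := by
    have h : (fun s => deriv (fun s' => f η s') s) =ᶠ[nhds t] fun s => RPM.Ft lam c η s := by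
      filter_upwards [(hopen η).mem_nhds hreg] with s hs
      have h' : (fun s' => f η s') =ᶠ[nhds s] fun s' => RPM.Ff lam c η s' := by
        filter_upwards [(hopen η).mem_nhds hs] with x hx using hfeq η x hx
      rw [h'.deriv_eq, (RPM.hasDerivAt_Ff_t hc0 η s).deriv]
    rw [h.deriv_eq, (RPM.hasDerivAt_Ft_t hc0 η t).deriv]
  have e3 : deriv (fun z => deriv (fun z' => f z' t) z) η = RPM.Fxx lam c η t := by
    have h : (fun z => deriv (fun z' => f z' t) z) =ᶠ[nhds η] fun z => RPM.Fx lam c z t := by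
      filter_upwards [hopenz.mem_nhds hreg] with z hz
      have h' : (fun z' => f z' t) =ᶠ[nhds z] fun z' => RPM.Ff lam c z' t := by
        filter_upwards [hopenz.mem_nhds hz] with x hx using hfeq x t hx
      rw [h'.deriv_eq, (RPM.hasDerivAt_Ff_x hc0 z t).deriv]
    rw [h.deriv_eq, (RPM.hasDerivAt_Fx_x hc0 η t).deriv]
  rw [e0, e1, e2, e3]
  exact RPM.key_identity hc0 η t
end

section
/- Let H_U : ℝ × [0,∞) → ℂ be C³ in t and satisfy ∂²H_U/∂t² + λ(t) ∂H_U/∂t = −(γ²c²/4) H_U for each fixed γ ∈ ℝ, where λ ∈ C¹. Then H_X = H_U² satisfies the third-order ODE ∂³H_X/∂t³ + 3λ(t) ∂²H_X/∂t² + (2λ(t)² + λ'(t) + γ²c²) ∂H_X/∂t + λ(t)γ²c² H_X = 0. -/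
/-- If `H_U(γ,·)` satisfies `∂²H_U/∂t² + λ(t) ∂H_U/∂t = −(γ²c²/4) H_U`, then
`H_X = H_U²` satisfies
`∂³H_X/∂t³ + 3λ(t) ∂²H_X/∂t² + (2λ(t)² + λ'(t) + γ²c²) ∂H_X/∂t + λ(t)γ²c² H_X = 0`. -/
theorem characteristic_function_sum_telegraph (c : ℝ)
    (lam : ℝ → ℝ) (hlam : ContDiff ℝ 1 lam)
    (HU : ℝ → ℝ → ℂ) (hHU : ∀ γ, ContDiff ℝ 3 (HU γ))
    (hode : ∀ γ t : ℝ,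
      deriv (fun s => deriv (HU γ) s) t + (lam t : ℂ) * deriv (HU γ) t
        = -((γ : ℂ) ^ 2 * (c : ℂ) ^ 2 / 4) * HU γ t)
    (HX : ℝ → ℝ → ℂ) (hHX : ∀ γ t, HX γ t = HU γ t ^ 2) :
    ∀ γ t : ℝ,
      deriv (fun s => deriv (fun s' => deriv (HX γ) s') s) t
          + 3 * (lam t : ℂ) * deriv (fun s => deriv (HX γ) s) t
          + (2 * (lam t : ℂ) ^ 2 + ((deriv lam t : ℝ) : ℂ) + (γ : ℂ) ^ 2 * (c : ℂ) ^ 2)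
              * deriv (HX γ) t
          + (lam t : ℂ) * (γ : ℂ) ^ 2 * (c : ℂ) ^ 2 * HX γ t = 0 := by
  intro γ t
  set u := HU γ with hu
  -- differentiability of u, u', u''
  have h3 : ContDiff ℝ ((2 : ℕ) + 1) u := by exact_mod_cast hHU γ
  rw [contDiff_succ_iff_deriv] at h3
  obtain ⟨hu1, -, h2c⟩ := h3
  have h2 : ContDiff ℝ ((1 : ℕ) + 1) (deriv u) := by exact_mod_cast h2c
  rw [contDiff_succ_iff_deriv] at h2
  obtain ⟨hu2, -, h1c⟩ := h2
  have hlamd : Differentiable ℝ lam := hlam.differentiable one_ne_zero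
  -- u'' as a function
  have eode : ∀ s, deriv (deriv u) s
      = -((γ : ℂ) ^ 2 * (c : ℂ) ^ 2 / 4) * u s - (lam s : ℂ) * deriv u s := by
    intro s
    have h := hode γ s
    rw [← hu] at h
    linear_combination h
  -- HX γ = u ^ 2
  have hHXf : HX γ = fun s => u s ^ 2 := funext fun s => by rw [hHX γ s, hu]
  -- first derivative of HX
  have d1 : ∀ s, HasDerivAt (HX γ) (2 * u s * deriv u s) s := by
    intro s
    rw [hHXf]
    have h := ((hu1 s).hasDerivAt).mul ((hu1 s).hasDerivAt)
    have : HasDerivAt (fun r => u r ^ 2) (deriv u s * u s + u s * deriv u s) s := by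
      simp only [pow_two]; exact h
    convert this using 1
    ring
  have e1 : deriv (HX γ) = fun s => 2 * u s * deriv u s :=
    funext fun s => (d1 s).deriv
  -- second derivative
  have d2 : ∀ s, HasDerivAt (deriv (HX γ))
      (2 * deriv u s * deriv u s + 2 * u s * deriv (deriv u) s) s := by
    intro s
    rw [e1]
    exact (((hu1 s).hasDerivAt).const_mul 2).mul ((hu2 s).hasDerivAt)
  have e2 : deriv (fun s => deriv (HX γ) s) = fun s =>
      2 * deriv u s * deriv u s + 2 * u s * deriv (deriv u) s :=
    funext fun s => (d2 s).deriv
  -- derivative of λ (as a complex-valued function)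
  have dlam : ∀ s, HasDerivAt (fun r => ((lam r : ℝ) : ℂ)) ((deriv lam s : ℝ) : ℂ) s :=
    fun s => ((hlamd s).hasDerivAt).ofReal_comp
  -- third derivative of u
  have hC : HasDerivAt (deriv (deriv u))
      (-((γ : ℂ) ^ 2 * (c : ℂ) ^ 2 / 4) * deriv u t
        - (((deriv lam t : ℝ) : ℂ) * deriv u t + (lam t : ℂ) * deriv (deriv u) t)) t := by
    have h0 : HasDerivAt
        (fun s => -((γ : ℂ) ^ 2 * (c : ℂ) ^ 2 / 4) * u s - (lam s : ℂ) * deriv u s)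
        (-((γ : ℂ) ^ 2 * (c : ℂ) ^ 2 / 4) * deriv u t
          - (((deriv lam t : ℝ) : ℂ) * deriv u t + (lam t : ℂ) * deriv (deriv u) t)) t :=
      (((hu1 t).hasDerivAt).const_mul _).sub ((dlam t).mul ((hu2 t).hasDerivAt))
    exact h0.congr_of_eventuallyEq (Filter.Eventually.of_forall fun s => eode s)
  -- third derivative of HX
  have d3 : HasDerivAt (fun s => deriv (fun s' => deriv (HX γ) s') s)
      (2 * deriv (deriv u) t * deriv u t + 2 * deriv u t * deriv (deriv u) t
        + (2 * deriv u t * deriv (deriv u) t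
          + 2 * u t * (-((γ : ℂ) ^ 2 * (c : ℂ) ^ 2 / 4) * deriv u t
              - (((deriv lam t : ℝ) : ℂ) * deriv u t
                  + (lam t : ℂ) * deriv (deriv u) t)))) t := by
    rw [e2]
    exact ((((hu2 t).hasDerivAt).const_mul 2).mul ((hu2 t).hasDerivAt)).add
      ((((hu1 t).hasDerivAt).const_mul 2).mul hC)
  rw [d3.deriv]
  simp only [e2]
  simp only [e1]
  rw [hHX γ t, ← hu, eode t]
  ring
end

section
/- Let p, w : ℝ × (0,∞) → ℝ be C² solutions of the system ∂p/∂t = ∂w/∂t + 2λ(t)w and 2∂²p/∂t² = c² ∂²p/∂x² + c² ∂²w/∂x² − 2λ(t) ∂p/∂t, where λ ∈ C¹ and both p and w are C³ in t. Then p satisfies the third-order equation ∂³p/∂t³ + 3λ(t) ∂²p/∂t² + (2λ(t)² + λ'(t)) ∂p/∂t = c² ∂³p/∂t∂x² + c² λ(t) ∂²p/∂x². -/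
open Function

noncomputable def ptd (f : ℝ → ℝ → ℝ) : ℝ → ℝ → ℝ := fun x t => deriv (f x) t
noncomputable def pxd (f : ℝ → ℝ → ℝ) : ℝ → ℝ → ℝ := fun x t => deriv (fun z => f z t) x

lemma hasDerivAt_ptd {f : ℝ → ℝ → ℝ} (x t : ℝ)
    (hf : DifferentiableAt ℝ (uncurry f) (x, t)) :
    HasDerivAt (f x) (fderiv ℝ (uncurry f) (x, t) (0, 1)) t :=
  hf.hasFDerivAt.comp_hasDerivAt t ((hasDerivAt_const t x).prodMk (hasDerivAt_id t))

lemma hasDerivAt_pxd {f : ℝ → ℝ → ℝ} (x t : ℝ)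
    (hf : DifferentiableAt ℝ (uncurry f) (x, t)) :
    HasDerivAt (fun z => f z t) (fderiv ℝ (uncurry f) (x, t) (1, 0)) x :=
  by have := hf.hasFDerivAt.comp_hasDerivAt x ((hasDerivAt_id x).prodMk (hasDerivAt_const x t)); exact this

lemma contDiff_ptd {f : ℝ → ℝ → ℝ} {m n : WithTop ℕ∞}
    (hf : ContDiff ℝ n (uncurry f)) (hmn : m + 1 ≤ n) :
    ContDiff ℝ m (uncurry (ptd f)) := by
  have hd : Differentiable ℝ (uncurry f) :=
    hf.differentiable (pos_iff_ne_zero.mp (lt_of_lt_of_le zero_lt_one (le_trans (le_add_self) hmn)))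
  have he : uncurry (ptd f) = fun q : ℝ × ℝ => fderiv ℝ (uncurry f) q (0, 1) := by
    funext q
    exact (hasDerivAt_ptd q.1 q.2 (hd (q.1, q.2))).deriv
  rw [he]
  exact (ContinuousLinearMap.apply ℝ ℝ ((0 : ℝ), (1 : ℝ))).contDiff.comp
    (hf.fderiv_right hmn)

lemma contDiff_pxd {f : ℝ → ℝ → ℝ} {m n : WithTop ℕ∞}
    (hf : ContDiff ℝ n (uncurry f)) (hmn : m + 1 ≤ n) :
    ContDiff ℝ m (uncurry (pxd f)) := by
  have hd : Differentiable ℝ (uncurry f) :=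
    hf.differentiable (pos_iff_ne_zero.mp (lt_of_lt_of_le zero_lt_one (le_trans (le_add_self) hmn)))
  have he : uncurry (pxd f) = fun q : ℝ × ℝ => fderiv ℝ (uncurry f) q (1, 0) := by
    funext q
    exact (hasDerivAt_pxd q.1 q.2 (hd (q.1, q.2))).deriv
  rw [he]
  exact (ContinuousLinearMap.apply ℝ ℝ ((1 : ℝ), (0 : ℝ))).contDiff.comp
    (hf.fderiv_right hmn)

lemma ptd_pxd_swap {f : ℝ → ℝ → ℝ} (hf : ContDiff ℝ 2 (uncurry f)) (x t : ℝ) :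
    pxd (ptd f) x t = ptd (pxd f) x t := by
  have hd : Differentiable ℝ (uncurry f) := hf.differentiable (by norm_num)
  have h1 : ContDiff ℝ 1 (fderiv ℝ (uncurry f)) := hf.fderiv_right (by norm_num)
  have hsymm : IsSymmSndFDerivAt ℝ (uncurry f) (x, t) :=
    hf.contDiffAt.isSymmSndFDerivAt (by simp)
  have hmid : HasFDerivAt (fderiv ℝ (uncurry f))
      (fderiv ℝ (fderiv ℝ (uncurry f)) (x, t)) (x, t) :=
    (h1.differentiable one_ne_zero (x, t)).hasFDerivAt
  -- LHS
  have e1 : (fun z => ptd f z t) = fun z => fderiv ℝ (uncurry f) (z, t) (0, 1) :=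
    funext fun z => (hasDerivAt_ptd z t (hd (z, t))).deriv
  have hcomp1 : HasDerivAt (fun z => fderiv ℝ (uncurry f) (z, t))
      (fderiv ℝ (fderiv ℝ (uncurry f)) (x, t) (1, 0)) x :=
    hmid.comp_hasDerivAt x ((hasDerivAt_id x).prodMk (hasDerivAt_const x t))
  have happ1 : HasDerivAt (fun z => fderiv ℝ (uncurry f) (z, t) (0, 1))
      (fderiv ℝ (fderiv ℝ (uncurry f)) (x, t) (1, 0) (0, 1)) x := by
    simpa using hcomp1.clm_apply (hasDerivAt_const x ((0 : ℝ), (1 : ℝ)))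
  -- RHS
  have e2 : (fun s => pxd f x s) = fun s => fderiv ℝ (uncurry f) (x, s) (1, 0) :=
    funext fun s => (hasDerivAt_pxd x s (hd (x, s))).deriv
  have hcomp2 : HasDerivAt (fun s => fderiv ℝ (uncurry f) (x, s))
      (fderiv ℝ (fderiv ℝ (uncurry f)) (x, t) (0, 1)) t :=
    hmid.comp_hasDerivAt t ((hasDerivAt_const t x).prodMk (hasDerivAt_id t))
  have happ2 : HasDerivAt (fun s => fderiv ℝ (uncurry f) (x, s) (1, 0))
      (fderiv ℝ (fderiv ℝ (uncurry f)) (x, t) (0, 1) (1, 0)) t := by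
    simpa using hcomp2.clm_apply (hasDerivAt_const t ((1 : ℝ), (0 : ℝ)))
  have hL : pxd (ptd f) x t = fderiv ℝ (fderiv ℝ (uncurry f)) (x, t) (1, 0) (0, 1) := by
    show deriv (fun z => ptd f z t) x = _
    rw [e1]
    exact happ1.deriv
  have hR : ptd (pxd f) x t = fderiv ℝ (fderiv ℝ (uncurry f)) (x, t) (0, 1) (1, 0) := by
    show deriv (fun s => pxd f x s) t = _
    rw [e2]
    exact happ2.deriv
  rw [hL, hR, hsymm]

/-- Elimination step: if `p, w` solve `∂p/∂t = ∂w/∂t + 2λ(t)w` and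
`2∂²p/∂t² = c² ∂²p/∂x² + c² ∂²w/∂x² − 2λ(t) ∂p/∂t`, then `p` solves
`∂³p/∂t³ + 3λ(t) ∂²p/∂t² + (2λ(t)² + λ'(t)) ∂p/∂t = c² ∂³p/∂t∂x² + c²λ(t) ∂²p/∂x²`. -/
theorem third_order_equation_three_velocity (c : ℝ)
    (p w : ℝ → ℝ → ℝ) (lam : ℝ → ℝ) (hlam : ContDiff ℝ 1 lam)
    (hp : ContDiff ℝ 3 (Function.uncurry p)) (hw : ContDiff ℝ 3 (Function.uncurry w))
    (hsys1 : ∀ x t : ℝ, 0 < t →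
      deriv (fun s => p x s) t = deriv (fun s => w x s) t + 2 * lam t * w x t)
    (hsys2 : ∀ x t : ℝ, 0 < t →
      2 * deriv (fun s => deriv (fun s' => p x s') s) t
        = c ^ 2 * deriv (fun z => deriv (fun z' => p z' t) z) x
            + c ^ 2 * deriv (fun z => deriv (fun z' => w z' t) z) x
            - 2 * lam t * deriv (fun s => p x s) t) :
    ∀ x t : ℝ, 0 < t →
      deriv (fun s => deriv (fun s' => deriv (fun s'' => p x s'') s') s) t
          + 3 * lam t * deriv (fun s => deriv (fun s' => p x s') s) t
          + (2 * lam t ^ 2 + deriv lam t) * deriv (fun s => p x s) t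
        = c ^ 2 * deriv (fun s => deriv (fun z => deriv (fun z' => p z' s) z) x) t
            + c ^ 2 * lam t * deriv (fun z => deriv (fun z' => p z' t) z) x := by
  intro x t ht
  -- regularity of partial derivatives (as uncurried functions)
  have hpt2 : ContDiff ℝ 2 (uncurry (ptd p)) := contDiff_ptd hp (by norm_num)
  have hptt1 : ContDiff ℝ 1 (uncurry (ptd (ptd p))) := contDiff_ptd hpt2 (by norm_num)
  have hpx2 : ContDiff ℝ 2 (uncurry (pxd p)) := contDiff_pxd hp (by norm_num)
  have hpxx1 : ContDiff ℝ 1 (uncurry (pxd (pxd p))) := contDiff_pxd hpx2 (by norm_num)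
  have hwt2 : ContDiff ℝ 2 (uncurry (ptd w)) := contDiff_ptd hw (by norm_num)
  have hwtx1 : ContDiff ℝ 1 (uncurry (pxd (ptd w))) := contDiff_pxd hwt2 (by norm_num)
  have hwx2 : ContDiff ℝ 2 (uncurry (pxd w)) := contDiff_pxd hw (by norm_num)
  have hwxx1 : ContDiff ℝ 1 (uncurry (pxd (pxd w))) := contDiff_pxd hwx2 (by norm_num)
  -- step 1 : differentiate hsys2 in t
  have dA : DifferentiableAt ℝ ((ptd (ptd p)) x) t :=
    (hasDerivAt_ptd x t ((hptt1.differentiable one_ne_zero) (x, t))).differentiableAt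
  have dB : DifferentiableAt ℝ ((pxd (pxd p)) x) t :=
    (hasDerivAt_ptd x t ((hpxx1.differentiable one_ne_zero) (x, t))).differentiableAt
  have dC : DifferentiableAt ℝ ((pxd (pxd w)) x) t :=
    (hasDerivAt_ptd x t ((hwxx1.differentiable one_ne_zero) (x, t))).differentiableAt
  have dD : DifferentiableAt ℝ ((ptd p) x) t :=
    (hasDerivAt_ptd x t ((hpt2.differentiable (by norm_num)) (x, t))).differentiableAt
  have hA : HasDerivAt ((ptd (ptd p)) x) (ptd (ptd (ptd p)) x t) t := dA.hasDerivAt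
  have hB : HasDerivAt ((pxd (pxd p)) x) (ptd (pxd (pxd p)) x t) t := dB.hasDerivAt
  have hC : HasDerivAt ((pxd (pxd w)) x) (ptd (pxd (pxd w)) x t) t := dC.hasDerivAt
  have hD : HasDerivAt ((ptd p) x) (ptd (ptd p) x t) t := dD.hasDerivAt
  have hl : HasDerivAt lam (deriv lam t) t :=
    ((hlam.differentiable one_ne_zero) t).hasDerivAt
  have heq : (fun s => 2 * ptd (ptd p) x s)
      =ᶠ[nhds t] fun s => c ^ 2 * pxd (pxd p) x s + c ^ 2 * pxd (pxd w) x s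
        - 2 * lam s * ptd p x s := by
    filter_upwards [Ioi_mem_nhds ht] with s hs
    exact hsys2 x s hs
  have hRHS : HasDerivAt (fun s => c ^ 2 * pxd (pxd p) x s + c ^ 2 * pxd (pxd w) x s
      - 2 * lam s * ptd p x s)
      (c ^ 2 * ptd (pxd (pxd p)) x t + c ^ 2 * ptd (pxd (pxd w)) x t
        - (2 * deriv lam t * ptd p x t + 2 * lam t * ptd (ptd p) x t)) t :=
    ((hB.const_mul (c ^ 2)).add (hC.const_mul (c ^ 2))).sub ((hl.const_mul 2).mul hD)
  have hi : 2 * ptd (ptd (ptd p)) x t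
      = c ^ 2 * ptd (pxd (pxd p)) x t + c ^ 2 * ptd (pxd (pxd w)) x t
        - (2 * deriv lam t * ptd p x t + 2 * lam t * ptd (ptd p) x t) :=
    (hA.const_mul 2).unique (hRHS.congr_of_eventuallyEq heq)
  -- step 2 : differentiate hsys1 twice in x (at fixed t)
  have e1 : (fun z => ptd p z t) = fun z => ptd w z t + 2 * lam t * w z t :=
    funext fun z => hsys1 z t ht
  have hq : ∀ z : ℝ, pxd (ptd p) z t = pxd (ptd w) z t + 2 * lam t * pxd w z t := by
    intro z
    have dwt : DifferentiableAt ℝ (fun z' => ptd w z' t) z :=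
      (hasDerivAt_pxd z t ((hwt2.differentiable (by norm_num)) (z, t))).differentiableAt
    have dw0 : DifferentiableAt ℝ (fun z' => w z' t) z :=
      (hasDerivAt_pxd z t ((hw.differentiable (by norm_num)) (z, t))).differentiableAt
    have h1 : HasDerivAt (fun z' => ptd w z' t + 2 * lam t * w z' t)
        (pxd (ptd w) z t + 2 * lam t * pxd w z t) z :=
      dwt.hasDerivAt.add (dw0.hasDerivAt.const_mul (2 * lam t))
    show deriv (fun z' => ptd p z' t) z = _
    rw [e1]
    exact h1.deriv
  have e2 : (fun z => pxd (ptd p) z t) = fun z => pxd (ptd w) z t + 2 * lam t * pxd w z t :=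
    funext hq
  have hii0 : pxd (pxd (ptd p)) x t
      = pxd (pxd (ptd w)) x t + 2 * lam t * pxd (pxd w) x t := by
    have dwtx : DifferentiableAt ℝ (fun z' => pxd (ptd w) z' t) x :=
      (hasDerivAt_pxd x t ((hwtx1.differentiable one_ne_zero) (x, t))).differentiableAt
    have dwx : DifferentiableAt ℝ (fun z' => pxd w z' t) x :=
      (hasDerivAt_pxd x t ((hwx2.differentiable (by norm_num)) (x, t))).differentiableAt
    have h1 : HasDerivAt (fun z' => pxd (ptd w) z' t + 2 * lam t * pxd w z' t)
        (pxd (pxd (ptd w)) x t + 2 * lam t * pxd (pxd w) x t) x :=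
      dwtx.hasDerivAt.add (dwx.hasDerivAt.const_mul (2 * lam t))
    show deriv (fun z => pxd (ptd p) z t) x = _
    rw [e2]
    exact h1.deriv
  -- step 3 : swap the mixed partial derivatives
  have sp1 : (fun z => pxd (ptd p) z t) = fun z => ptd (pxd p) z t :=
    funext fun z => ptd_pxd_swap (hp.of_le (by norm_num)) z t
  have swp : pxd (pxd (ptd p)) x t = ptd (pxd (pxd p)) x t := by
    calc pxd (pxd (ptd p)) x t = deriv (fun z => pxd (ptd p) z t) x := rfl
      _ = deriv (fun z => ptd (pxd p) z t) x := by rw [sp1]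
      _ = pxd (ptd (pxd p)) x t := rfl
      _ = ptd (pxd (pxd p)) x t := ptd_pxd_swap hpx2 x t
  have sw1 : (fun z => pxd (ptd w) z t) = fun z => ptd (pxd w) z t :=
    funext fun z => ptd_pxd_swap (hw.of_le (by norm_num)) z t
  have sww : pxd (pxd (ptd w)) x t = ptd (pxd (pxd w)) x t := by
    calc pxd (pxd (ptd w)) x t = deriv (fun z => pxd (ptd w) z t) x := rfl
      _ = deriv (fun z => ptd (pxd w) z t) x := by rw [sw1]
      _ = pxd (ptd (pxd w)) x t := rfl
      _ = ptd (pxd (pxd w)) x t := ptd_pxd_swap hwx2 x t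
  have hii : ptd (pxd (pxd p)) x t
      = ptd (pxd (pxd w)) x t + 2 * lam t * pxd (pxd w) x t := by
    rw [← swp, ← sww]; exact hii0
  -- step 4 : hsys2 at time t
  have hiii : 2 * ptd (ptd p) x t
      = c ^ 2 * pxd (pxd p) x t + c ^ 2 * pxd (pxd w) x t - 2 * lam t * ptd p x t :=
    hsys2 x t ht
  -- conclude
  show ptd (ptd (ptd p)) x t + 3 * lam t * ptd (ptd p) x t
      + (2 * lam t ^ 2 + deriv lam t) * ptd p x t
    = c ^ 2 * ptd (pxd (pxd p)) x t + c ^ 2 * lam t * pxd (pxd p) x t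
  linear_combination (1 / 2) * hi - (c ^ 2 / 2) * hii + lam t * hiii
end

section
/- For λ, c > 0 and t ≥ 0, the sum Σ_{h=0}^∞ Σ_{k=0}^∞ (λ/(2c))^{2h+2k} (1/((h!)²(k!)²)) (ct/2)^{2h+2k+1} · (h+k)!·√π / Γ(h+k+3/2) equals c ∫₀ᵗ I₀(λs) ds. -/
lemma gamma_add_three_half (m : ℕ) :
    Real.Gamma ((m : ℝ) + 3 / 2) =
      (Nat.factorial (2 * m + 1) : ℝ) * Real.sqrt Real.pi /
        (2 ^ (2 * m + 1) * (Nat.factorial m : ℝ)) := by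
  induction m with
  | zero =>
    have h32 : ((0 : ℕ) : ℝ) + 3 / 2 = 1 / 2 + 1 := by norm_num
    rw [h32, Real.Gamma_add_one (by norm_num), Real.Gamma_one_half_eq]
    norm_num
    ring
  | succ n ih =>
    have h1 : ((n + 1 : ℕ) : ℝ) + 3 / 2 = ((n : ℝ) + 3 / 2) + 1 := by push_cast; ring
    rw [h1, Real.Gamma_add_one (by positivity), ih]
    have e1 : (Nat.factorial (2 * (n + 1) + 1) : ℝ)
        = ((2 * n + 3) * (2 * n + 2)) * Nat.factorial (2 * n + 1) := by
      have h : 2 * (n + 1) + 1 = (2 * n + 1) + 1 + 1 := by ring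
      rw [h, Nat.factorial_succ, Nat.factorial_succ]
      push_cast; ring
    have e2 : (Nat.factorial (n + 1) : ℝ) = (n + 1) * Nat.factorial n := by
      rw [Nat.factorial_succ]; push_cast; ring
    rw [e1, e2]
    have hfn : (Nat.factorial n : ℝ) ≠ 0 := Nat.cast_ne_zero.mpr (Nat.factorial_ne_zero n)
    have h2p : (2 : ℝ) ^ (2 * n + 1) ≠ 0 := by positivity
    have hn1 : ((n : ℝ) + 1) ≠ 0 := by positivity
    field_simp
    ring

lemma term_eq (lam c t : ℝ) (hc : 0 < c) (h k : ℕ) :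
    (lam / (2 * c)) ^ (2 * h + 2 * k) *
        (1 / ((Nat.factorial h : ℝ) ^ 2 * (Nat.factorial k : ℝ) ^ 2)) *
        (c * t / 2) ^ (2 * h + 2 * k + 1) *
        ((Nat.factorial (h + k) : ℝ) * Real.sqrt Real.pi /
          Real.Gamma ((h : ℝ) + (k : ℝ) + 3 / 2))
      = c * t * (lam * t / 2) ^ (2 * h + 2 * k) * ((h + k).choose h : ℝ) ^ 2 /
          (Nat.factorial (2 * (h + k) + 1) : ℝ) := by
  have hcast : (h : ℝ) + (k : ℝ) + 3 / 2 = ((h + k : ℕ) : ℝ) + 3 / 2 := by push_cast; ring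
  rw [hcast, gamma_add_three_half]
  have hch : ((h + k).choose h : ℝ) * (Nat.factorial h : ℝ) * (Nat.factorial k : ℝ)
      = (Nat.factorial (h + k) : ℝ) := by
    have := Nat.choose_mul_factorial_mul_factorial (Nat.le_add_right h k)
    rw [Nat.add_sub_cancel_left] at this
    exact_mod_cast this
  rw [← hch]
  have hfh : (Nat.factorial h : ℝ) ≠ 0 := Nat.cast_ne_zero.mpr (Nat.factorial_ne_zero _)
  have hfk : (Nat.factorial k : ℝ) ≠ 0 := Nat.cast_ne_zero.mpr (Nat.factorial_ne_zero _)
  have hf2 : (Nat.factorial (2 * (h + k) + 1) : ℝ) ≠ 0 :=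
    Nat.cast_ne_zero.mpr (Nat.factorial_ne_zero _)
  have hsp : Real.sqrt Real.pi ≠ 0 := ne_of_gt (Real.sqrt_pos.mpr Real.pi_pos)
  have h2p : (2 : ℝ) ^ (2 * (h + k) + 1) ≠ 0 := by positivity
  have hcne : c ≠ 0 := ne_of_gt hc
  rw [div_pow, mul_pow]
  field_simp
  ring




lemma choose_le_two_pow' (m h : ℕ) : m.choose h ≤ 2 ^ m := by
  rcases le_or_gt h m with hle | hlt
  · calc m.choose h ≤ ∑ i ∈ Finset.range (m + 1), m.choose i :=
        Finset.single_le_sum (fun _ _ => Nat.zero_le _) (Finset.mem_range.mpr (by omega))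
      _ = 2 ^ m := Nat.sum_range_choose m
  · simp [Nat.choose_eq_zero_of_lt hlt]

lemma nat_bound (h k : ℕ) :
    ((h + k).choose h) ^ 2 * (h.factorial * k.factorial)
      ≤ 4 ^ (h + k) * (2 * (h + k) + 1).factorial := by
  have h1 : ((h + k).choose h) ^ 2 ≤ 4 ^ (h + k) := by
    calc ((h + k).choose h) ^ 2 ≤ (2 ^ (h + k)) ^ 2 :=
        Nat.pow_le_pow_left (choose_le_two_pow' _ _) 2
      _ = 4 ^ (h + k) := by rw [← pow_mul, mul_comm, pow_mul]; norm_num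
  have h2 : h.factorial * k.factorial ≤ (2 * (h + k) + 1).factorial := by
    calc h.factorial * k.factorial ≤ (h + k).factorial :=
        Nat.le_of_dvd (h + k).factorial_pos (Nat.factorial_mul_factorial_dvd_factorial_add h k)
      _ ≤ (2 * (h + k) + 1).factorial := Nat.factorial_le (by omega)
  exact Nat.mul_le_mul h1 h2

lemma summable_G (lam c t : ℝ) (hlam : 0 < lam) (hc : 0 < c) (ht : 0 ≤ t) :
    Summable (fun p : ℕ × ℕ =>
      c * t * (lam * t / 2) ^ (2 * p.1 + 2 * p.2) * (((p.1 + p.2).choose p.1 : ℕ) : ℝ) ^ 2 /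
        (Nat.factorial (2 * (p.1 + p.2) + 1) : ℝ)) := by
  have hq : (0:ℝ) ≤ (lam * t) ^ 2 := sq_nonneg _
  have hf1 : Summable (fun h : ℕ => c * t * (((lam * t) ^ 2) ^ h / (Nat.factorial h : ℝ))) :=
    (Real.summable_pow_div_factorial _).mul_left (c * t)
  have hf2 : Summable (fun k : ℕ => ((lam * t) ^ 2) ^ k / (Nat.factorial k : ℝ)) :=
    Real.summable_pow_div_factorial _
  have hbig : Summable (fun p : ℕ × ℕ =>
      (c * t * (((lam * t) ^ 2) ^ p.1 / (Nat.factorial p.1 : ℝ))) *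
        (((lam * t) ^ 2) ^ p.2 / (Nat.factorial p.2 : ℝ))) := by
    apply hf1.mul_of_nonneg hf2
    · intro h
      have : (0:ℝ) ≤ ((lam * t) ^ 2) ^ h / (Nat.factorial h : ℝ) := by positivity
      have hct : (0:ℝ) ≤ c * t := mul_nonneg hc.le ht
      exact mul_nonneg hct this
    · intro k; positivity
  apply Summable.of_nonneg_of_le _ _ hbig
  · intro p
    have hA : (0:ℝ) ≤ (lam * t / 2) ^ (2 * p.1 + 2 * p.2) := by
      apply pow_nonneg
      have : (0:ℝ) ≤ lam * t := mul_nonneg hlam.le ht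
      linarith
    have hF : (0:ℝ) < (Nat.factorial (2 * (p.1 + p.2) + 1) : ℝ) := by
      exact_mod_cast Nat.factorial_pos _
    have hC : (0:ℝ) ≤ (((p.1 + p.2).choose p.1 : ℕ) : ℝ) ^ 2 := sq_nonneg _
    have hct : (0:ℝ) ≤ c * t := mul_nonneg hc.le ht
    exact div_nonneg (mul_nonneg (mul_nonneg hct hA) hC) hF.le
  · rintro ⟨h, k⟩
    simp only
    have hA : (0:ℝ) ≤ (lam * t / 2) ^ (2 * h + 2 * k) := by
      apply pow_nonneg
      have : (0:ℝ) ≤ lam * t := mul_nonneg hlam.le ht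
      linarith
    have hct : (0:ℝ) ≤ c * t := mul_nonneg hc.le ht
    have hF : (0:ℝ) < (Nat.factorial (2 * (h + k) + 1) : ℝ) := by
      exact_mod_cast Nat.factorial_pos _
    have hHK : (0:ℝ) < (Nat.factorial h : ℝ) * (Nat.factorial k : ℝ) := by
      have h1 : (0:ℝ) < (Nat.factorial h : ℝ) := by exact_mod_cast Nat.factorial_pos _
      have h2 : (0:ℝ) < (Nat.factorial k : ℝ) := by exact_mod_cast Nat.factorial_pos _
      exact mul_pos h1 h2
    -- rewrite rhs
    have hrhs : (c * t * (((lam * t) ^ 2) ^ h / (Nat.factorial h : ℝ))) *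
          (((lam * t) ^ 2) ^ k / (Nat.factorial k : ℝ))
        = c * t * (lam * t / 2) ^ (2 * h + 2 * k) *
            ((4:ℝ) ^ (h + k) / ((Nat.factorial h : ℝ) * (Nat.factorial k : ℝ))) := by
      have e1 : ((lam * t) ^ 2) ^ h * ((lam * t) ^ 2) ^ k
          = (lam * t / 2) ^ (2 * h + 2 * k) * (4:ℝ) ^ (h + k) := by
        rw [← pow_add, show 2 * h + 2 * k = 2 * (h + k) by ring, pow_mul, ← mul_pow]
        congr 1
        ring
      calc (c * t * (((lam * t) ^ 2) ^ h / (Nat.factorial h : ℝ))) *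
            (((lam * t) ^ 2) ^ k / (Nat.factorial k : ℝ))
          = c * t * ((((lam * t) ^ 2) ^ h * ((lam * t) ^ 2) ^ k) /
              ((Nat.factorial h : ℝ) * (Nat.factorial k : ℝ))) := by ring
        _ = c * t * (((lam * t / 2) ^ (2 * h + 2 * k) * (4:ℝ) ^ (h + k)) /
              ((Nat.factorial h : ℝ) * (Nat.factorial k : ℝ))) := by rw [e1]
        _ = c * t * (lam * t / 2) ^ (2 * h + 2 * k) *
              ((4:ℝ) ^ (h + k) / ((Nat.factorial h : ℝ) * (Nat.factorial k : ℝ))) := by ring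
    rw [hrhs, mul_div_assoc]
    apply mul_le_mul_of_nonneg_left _ (mul_nonneg hct hA)
    rw [div_le_div_iff₀ hF hHK]
    have := nat_bound h k
    calc (((h + k).choose h : ℕ) : ℝ) ^ 2 * ((Nat.factorial h : ℝ) * (Nat.factorial k : ℝ))
        = ((((h + k).choose h) ^ 2 * (h.factorial * k.factorial) : ℕ) : ℝ) := by push_cast; ring
      _ ≤ (((4 ^ (h + k) * (2 * (h + k) + 1).factorial : ℕ)) : ℝ) := by exact_mod_cast this
      _ = (4:ℝ) ^ (h + k) * (Nat.factorial (2 * (h + k) + 1) : ℝ) := by push_cast; ring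

lemma sum_antidiagonal_G (lam c t : ℝ) (n : ℕ) :
    ∑ p ∈ Finset.HasAntidiagonal.antidiagonal n,
        c * t * (lam * t / 2) ^ (2 * p.1 + 2 * p.2) * (((p.1 + p.2).choose p.1 : ℕ) : ℝ) ^ 2 /
          (Nat.factorial (2 * (p.1 + p.2) + 1) : ℝ)
      = c * t * (lam * t / 2) ^ (2 * n) / ((2 * (n:ℝ) + 1) * (Nat.factorial n : ℝ) ^ 2) := by
  have hstep : ∀ p ∈ Finset.HasAntidiagonal.antidiagonal n,
      c * t * (lam * t / 2) ^ (2 * p.1 + 2 * p.2) * (((p.1 + p.2).choose p.1 : ℕ) : ℝ) ^ 2 /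
          (Nat.factorial (2 * (p.1 + p.2) + 1) : ℝ)
        = (c * t * (lam * t / 2) ^ (2 * n) / (Nat.factorial (2 * n + 1) : ℝ)) *
            ((n.choose p.1 * n.choose p.2 : ℕ) : ℝ) := by
    rintro ⟨h, k⟩ hp
    rw [Finset.HasAntidiagonal.mem_antidiagonal] at hp
    simp only at hp ⊢
    subst hp
    have hsymm : (h + k).choose k = (h + k).choose h := by
      have := Nat.choose_symm (Nat.le_add_right h k)
      rwa [Nat.add_sub_cancel_left] at this
    rw [hsymm]
    have : 2 * h + 2 * k = 2 * (h + k) := by ring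
    rw [this]
    push_cast
    ring
  rw [Finset.sum_congr rfl hstep, ← Finset.mul_sum, ← Nat.cast_sum, ← Nat.add_choose_eq]
  -- now ((n+n).choose n : ℝ)
  have hcentral : ((n + n).choose n : ℝ) * (Nat.factorial n : ℝ) * (Nat.factorial n : ℝ)
      = (Nat.factorial (n + n) : ℝ) := by
    have := Nat.choose_mul_factorial_mul_factorial (Nat.le_add_right n n)
    rw [Nat.add_sub_cancel_left] at this
    exact_mod_cast this
  have hfs : (Nat.factorial (2 * n + 1) : ℝ) = (2 * (n:ℝ) + 1) * (Nat.factorial (n + n) : ℝ) := by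
    rw [Nat.factorial_succ, two_mul]; push_cast; ring
  rw [hfs, ← hcentral]
  have h1 : (Nat.factorial n : ℝ) ≠ 0 := Nat.cast_ne_zero.mpr (Nat.factorial_ne_zero _)
  have h2 : (2 * (n:ℝ) + 1) ≠ 0 := by positivity
  have h3 : ((n + n).choose n : ℝ) ≠ 0 := by
    exact_mod_cast Nat.ne_of_gt (Nat.choose_pos (Nat.le_add_right n n))
  field_simp



lemma summable_B (lam t : ℝ) (ht : 0 ≤ t) :
    Summable (fun k : ℕ =>
      (lam / 2) ^ (2 * k) * t ^ (2 * k + 1) / ((2 * k + 1 : ℝ) * (Nat.factorial k : ℝ) ^ 2)) := by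
  have hs : Summable (fun k : ℕ => t * (((lam * t / 2) ^ 2) ^ k / (Nat.factorial k : ℝ))) :=
    (Real.summable_pow_div_factorial _).mul_left t
  apply Summable.of_nonneg_of_le _ _ hs
  · intro k
    have h1 : (0:ℝ) ≤ (lam / 2) ^ (2 * k) := by rw [pow_mul]; exact pow_nonneg (sq_nonneg _) k
    have h2 : (0:ℝ) ≤ t ^ (2 * k + 1) := pow_nonneg ht _
    have h3 : (0:ℝ) < (2 * k + 1 : ℝ) * (Nat.factorial k : ℝ) ^ 2 := by positivity
    exact div_nonneg (mul_nonneg h1 h2) h3.le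
  · intro k
    have he : (lam / 2) ^ (2 * k) * t ^ (2 * k + 1)
        = t * ((lam * t / 2) ^ 2) ^ k := by
      rw [← pow_mul]; ring
    rw [he, mul_div_assoc]
    apply mul_le_mul_of_nonneg_left _ ht
    apply div_le_div_of_nonneg_left (pow_nonneg (sq_nonneg _) k) _ _
    · positivity
    · have h1 : (1:ℝ) ≤ (Nat.factorial k : ℝ) := by
        exact_mod_cast Nat.one_le_iff_ne_zero.mpr (Nat.factorial_ne_zero k)
      nlinarith

lemma integral_term (lam t : ℝ) (k : ℕ) :
    ∫ s in (0:ℝ)..t, (lam * s / 2) ^ (2 * k) / (Nat.factorial k : ℝ) ^ 2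
      = (lam / 2) ^ (2 * k) * t ^ (2 * k + 1) / ((2 * k + 1 : ℝ) * (Nat.factorial k : ℝ) ^ 2) := by
  have he : ∀ s : ℝ, (lam * s / 2) ^ (2 * k) / (Nat.factorial k : ℝ) ^ 2
      = ((lam / 2) ^ (2 * k) / (Nat.factorial k : ℝ) ^ 2) * s ^ (2 * k) := by
    intro s; ring
  simp_rw [he]
  rw [intervalIntegral.integral_const_mul, integral_pow]
  rw [zero_pow (by omega)]
  push_cast
  have h1 : ((2 * k : ℝ) + 1) ≠ 0 := by positivity
  have h2 : (Nat.factorial k : ℝ) ≠ 0 := Nat.cast_ne_zero.mpr (Nat.factorial_ne_zero _)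
  rw [sub_zero]
  field_simp
  try ring
  try exact Or.inl trivial

lemma integral_besselI0 (lam t : ℝ) (ht : 0 ≤ t) :
    ∫ s in (0:ℝ)..t, besselI0 (lam * s)
      = ∑' k : ℕ,
          (lam / 2) ^ (2 * k) * t ^ (2 * k + 1) / ((2 * k + 1 : ℝ) * (Nat.factorial k : ℝ) ^ 2) := by
  set f : ℕ → ℝ → ℝ := fun k s => (lam * s / 2) ^ (2 * k) / (Nat.factorial k : ℝ) ^ 2 with hf
  have hnn : ∀ k s, 0 ≤ f k s := by
    intro k s
    have h1 : (0:ℝ) ≤ (lam * s / 2) ^ (2 * k) := by rw [pow_mul]; exact pow_nonneg (sq_nonneg _) k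
    positivity
  have hcont : ∀ k, Continuous (f k) := by
    intro k
    apply Continuous.div_const
    exact (continuous_const.mul continuous_id').div_const 2 |>.pow _
  have hint : ∀ k, MeasureTheory.IntegrableOn (f k) (Set.Ioc 0 t) := fun k =>
    (hcont k).integrableOn_Ioc
  have hbess : ∀ s : ℝ, besselI0 (lam * s) = ∑' k, f k s := by
    intro s
    unfold besselI0
    exact rfl
  rw [intervalIntegral.integral_of_le ht]
  simp_rw [hbess]
  rw [MeasureTheory.integral_tsum (fun k => (hcont k).aestronglyMeasurable)]
  · apply tsum_congr
    intro k
    have := integral_term lam t k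
    rw [intervalIntegral.integral_of_le ht] at this
    exact this
  · have hlin : ∀ k, ∫⁻ s in Set.Ioc (0:ℝ) t, ‖f k s‖ₑ
        = ENNReal.ofReal ((lam / 2) ^ (2 * k) * t ^ (2 * k + 1) /
            ((2 * k + 1 : ℝ) * (Nat.factorial k : ℝ) ^ 2)) := by
      intro k
      have h1 : ∀ s : ℝ, ‖f k s‖ₑ = ENNReal.ofReal (f k s) := fun s =>
        Real.enorm_eq_ofReal (hnn k s)
      simp_rw [h1]
      rw [← MeasureTheory.ofReal_integral_eq_lintegral_ofReal (hint k)
        (MeasureTheory.ae_of_all _ (fun s => hnn k s))]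
      congr 1
      have := integral_term lam t k
      rw [intervalIntegral.integral_of_le ht] at this
      exact this
    simp_rw [hlin]
    rw [← ENNReal.ofReal_tsum_of_nonneg]
    · exact ENNReal.ofReal_ne_top
    · intro k
      have h1 : (0:ℝ) ≤ (lam / 2) ^ (2 * k) := by rw [pow_mul]; exact pow_nonneg (sq_nonneg _) k
      have h2 : (0:ℝ) ≤ t ^ (2 * k + 1) := pow_nonneg ht _
      positivity
    · exact summable_B lam t ht

/-- Double-series identity:
`∑_{h,k} (λ/(2c))^{2h+2k} 1/((h!)²(k!)²) (ct/2)^{2h+2k+1} (h+k)!√π/Γ(h+k+3/2)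
  = c ∫₀ᵗ I₀(λs) ds`. -/
theorem double_series_besselI0 (lam c t : ℝ) (hlam : 0 < lam) (hc : 0 < c) (ht : 0 ≤ t) :
    ∑' h : ℕ, ∑' k : ℕ,
        (lam / (2 * c)) ^ (2 * h + 2 * k) *
          (1 / ((Nat.factorial h : ℝ) ^ 2 * (Nat.factorial k : ℝ) ^ 2)) *
          (c * t / 2) ^ (2 * h + 2 * k + 1) *
          ((Nat.factorial (h + k) : ℝ) * Real.sqrt Real.pi /
            Real.Gamma ((h : ℝ) + (k : ℝ) + 3 / 2))
      = c * ∫ s in (0:ℝ)..t, besselI0 (lam * s) := by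
  set G : ℕ × ℕ → ℝ := fun p =>
    c * t * (lam * t / 2) ^ (2 * p.1 + 2 * p.2) * (((p.1 + p.2).choose p.1 : ℕ) : ℝ) ^ 2 /
      (Nat.factorial (2 * (p.1 + p.2) + 1) : ℝ) with hGdef
  have hG : Summable G := summable_G lam c t hlam hc ht
  have step1 : ∑' h : ℕ, ∑' k : ℕ,
      (lam / (2 * c)) ^ (2 * h + 2 * k) *
        (1 / ((Nat.factorial h : ℝ) ^ 2 * (Nat.factorial k : ℝ) ^ 2)) *
        (c * t / 2) ^ (2 * h + 2 * k + 1) *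
        ((Nat.factorial (h + k) : ℝ) * Real.sqrt Real.pi /
          Real.Gamma ((h : ℝ) + (k : ℝ) + 3 / 2))
      = ∑' h : ℕ, ∑' k : ℕ, G (h, k) :=
    tsum_congr fun h => tsum_congr fun k => term_eq lam c t hc h k
  have step2 : ∑' p : ℕ × ℕ, G p = ∑' h : ℕ, ∑' k : ℕ, G (h, k) :=
    Summable.tsum_prod' hG hG.prod_factor
  have step3 : ∑' p : ℕ × ℕ, G p = ∑' n : ℕ, ∑ kl ∈ Finset.HasAntidiagonal.antidiagonal n, G kl := by
    conv_rhs => congr; ext; rw [← Finset.sum_finset_coe, ← tsum_fintype (L := .unconditional _)]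
    rw [← Finset.HasAntidiagonal.sigmaAntidiagonalEquivProd.tsum_eq G]
    exact Summable.tsum_sigma' (fun n => (hasSum_fintype _).summable)
      (Finset.HasAntidiagonal.sigmaAntidiagonalEquivProd.summable_iff.mpr hG)
  rw [step1, ← step2, step3]
  have step4 : ∀ n : ℕ, ∑ kl ∈ Finset.HasAntidiagonal.antidiagonal n, G kl
      = c * t * (lam * t / 2) ^ (2 * n) / ((2 * (n:ℝ) + 1) * (Nat.factorial n : ℝ) ^ 2) :=
    fun n => sum_antidiagonal_G lam c t n
  rw [tsum_congr step4, integral_besselI0 lam t ht, ← tsum_mul_left]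
  apply tsum_congr
  intro n
  ring
end
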